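/- arXiv:2209.02315 — 6 statements merged into one kernel-verified Lean document; each statement's English description precedes it below -/
import Mathlib

section
/- Let f_i : ℝ^N → ℝ ∪ {+∞} for i = 1, …, M, where dom f_i := {x : f_i(x) < ∞} is closed and convex for every i, and suppose each f_i is directionally differentiable, i.e., for every x ∈ dom f_i and every d ∈ F(x; dom f_i) the limit f_i′(x; d) := lim_{ς→0⁺} (f_i(x + ςd) − f_i(x))/ς exists in ℝ. Define F(x) := min_{i ∈ [M]} f_i(x) and suppose F is continuous on dom F. Then F is directionally differentiable, and for every x ∈ dom F and every d ∈ F(x; dom F) one has F′(x; d) = min_{i ∈ I*(x,d)} f_i′(x; d), where I(x,d) := {i ∈ [M] : x ∈ dom f_i and d ∈ F(x; dom f_i)} and I*(x,d) := {i ∈ I(x,d) : f_i(x) = F(x)}. -/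
open Filter Topology

/-- The feasible cone of `C` at `x`: directions `d` such that `x + ςd ∈ C` for all
sufficiently small `ς > 0` (empty when `x ∉ C`). -/
def feasCone {E : Type*} [AddCommMonoid E] [SMul ℝ E] (C : Set E) (x : E) : Set E :=
  {d | x ∈ C ∧ ∃ ς' > (0 : ℝ), ∀ ς : ℝ, 0 < ς → ς < ς' → x + ς • d ∈ C}

/-- `f` has one-sided directional derivative `L` at `x` in direction `d`. -/
def HasDDerivAt {E : Type*} [AddCommMonoid E] [SMul ℝ E] (f : E → ℝ) (x d : E) (L : ℝ) :
    Prop :=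
  Tendsto (fun ς : ℝ => (f (x + ς • d) - f x) / ς) (nhdsWithin 0 (Set.Ioi 0)) (nhds L)

/-- Each extended-real-valued `f_i` is encoded as a real-valued function `g i` on its
domain `D i` (and `+∞` off `D i`); `F = min_i f_i` is real-valued on `⋃ i, D i`, where it
equals the minimum of the `g i x` over the `i` with `x ∈ D i`. -/
theorem stmt2 {N M : ℕ} (hM : 0 < M)
    (D : Fin M → Set (Fin N → ℝ)) (g : Fin M → (Fin N → ℝ) → ℝ)
    (hDcl : ∀ i, IsClosed (D i)) (hDcv : ∀ i, Convex ℝ (D i))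
    -- each f_i is directionally differentiable, with derivative df i x d
    (df : Fin M → (Fin N → ℝ) → (Fin N → ℝ) → ℝ)
    (hdf : ∀ i, ∀ x ∈ D i, ∀ d ∈ feasCone (D i) x, HasDDerivAt (g i) x d (df i x d))
    (F : (Fin N → ℝ) → ℝ)
    (hF : ∀ x ∈ ⋃ i, D i, IsLeast {v : ℝ | ∃ i, x ∈ D i ∧ v = g i x} (F x))
    (hFcont : ContinuousOn F (⋃ i, D i)) :
    ∀ x ∈ ⋃ i, D i, ∀ d ∈ feasCone (⋃ i, D i) x,
      ∃ L : ℝ,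
        IsLeast {v : ℝ | ∃ i, (x ∈ D i ∧ d ∈ feasCone (D i) x) ∧ g i x = F x ∧
          v = df i x d} L ∧
        HasDDerivAt F x d L := by
  classical
  intro x hx d hd
  obtain ⟨-, ςU, hςU, hUmem⟩ := hd
  set l : Filter ℝ := nhdsWithin (0 : ℝ) (Set.Ioi 0) with hl
  have hne : l.NeBot := nhdsGT_neBot 0
  set φ : ℝ → (Fin N → ℝ) := fun ς => x + ς • d with hφ
  have hς0 : Tendsto (fun ς : ℝ => ς) l (𝓝 0) := tendsto_id.mono_right nhdsWithin_le_nhds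
  have hςpos : ∀ᶠ ς in l, (0 : ℝ) < ς := eventually_mem_nhdsWithin
  have hφt : Tendsto φ l (𝓝 x) := by
    have hc : Continuous φ := by
      apply continuous_const.add
      exact continuous_id.smul continuous_const
    have h0 : Tendsto φ (𝓝 (0:ℝ)) (𝓝 x) := by
      have := hc.tendsto 0
      simpa [hφ] using this
    exact h0.mono_left nhdsWithin_le_nhds
  have hφU : ∀ᶠ ς in l, φ ς ∈ ⋃ i, D i := by
    have hlt : ∀ᶠ ς in l, ς < ςU := hς0.eventually_lt_const hςU
    filter_upwards [hςpos, hlt] with ς h1 h2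
    exact hUmem ς h1 h2
  have hφUt : Tendsto φ l (𝓝[⋃ i, D i] x) :=
    tendsto_nhdsWithin_iff.2 ⟨hφt, hφU⟩
  have hFt : Tendsto (fun ς => F (φ ς)) l (𝓝 (F x)) := Filter.Tendsto.comp (hFcont x hx) hφUt
  -- if one feasible point on the ray is in D j (and x ∈ D j), then d is in the cone
  have cone_of : ∀ j, x ∈ D j → ∀ ς₀ : ℝ, 0 < ς₀ → x + ς₀ • d ∈ D j →
      d ∈ feasCone (D j) x := by
    intro j hxj ς₀ hς₀ hmem
    refine ⟨hxj, ς₀, hς₀, fun ς hς hςlt => ?_⟩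
    have h1 : 0 ≤ 1 - ς / ς₀ := sub_nonneg.2 ((div_le_one hς₀).2 hςlt.le)
    have h2 : 0 ≤ ς / ς₀ := by positivity
    have h3 : (1 - ς / ς₀) + ς / ς₀ = 1 := by ring
    have hmem2 := hDcv j hxj hmem h1 h2 h3
    have heq : x + ς • d = (1 - ς / ς₀) • x + (ς / ς₀) • (x + ς₀ • d) := by
      rw [smul_add, smul_smul, div_mul_cancel₀ _ (ne_of_gt hς₀), sub_smul, one_smul]
      abel
    rw [heq]; exact hmem2
  have hq : ∀ j, x ∈ D j → d ∈ feasCone (D j) x →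
      Tendsto (fun ς => (g j (φ ς) - g j x) / ς) l (𝓝 (df j x d)) := by
    intro j h1 h2
    exact hdf j x h1 d h2
  have hg_t : ∀ j, x ∈ D j → d ∈ feasCone (D j) x →
      Tendsto (fun ς => g j (φ ς)) l (𝓝 (g j x)) := by
    intro j h1 h2
    have h3 : Tendsto (fun ς => ((g j (φ ς) - g j x) / ς) * ς + g j x) l
        (𝓝 (df j x d * 0 + g j x)) := ((hq j h1 h2).mul hς0).add tendsto_const_nhds
    rw [mul_zero, zero_add] at h3
    apply h3.congr'
    filter_upwards [hςpos] with ς hςp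
    rw [div_mul_cancel₀ _ (ne_of_gt hςp)]
    ring
  have key : ∀ j, (∃ᶠ ς in l, φ ς ∈ D j ∧ F (φ ς) = g j (φ ς)) →
      (x ∈ D j ∧ d ∈ feasCone (D j) x) ∧ g j x = F x := by
    intro j hfreq
    have hxj : x ∈ D j := by
      have hcl := mem_closure_of_frequently_of_tendsto
        (hfreq.mono fun ς h => h.1) hφt
      rwa [(hDcl j).closure_eq] at hcl
    have hfeas : d ∈ feasCone (D j) x := by
      obtain ⟨ς₀, hmem', hς₀⟩ := (hfreq.and_eventually hςpos).exists
      exact cone_of j hxj ς₀ hς₀ hmem'.1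
    refine ⟨⟨hxj, hfeas⟩, ?_⟩
    exact (tendsto_nhds_unique_of_frequently_eq hFt (hg_t j hxj hfeas)
      (hfreq.mono fun ς h => h.2)).symm
  -- existence of a minimizing active index
  have hex : ∃ j, (x ∈ D j ∧ d ∈ feasCone (D j) x) ∧ g j x = F x := by
    by_contra hcon
    have hev : ∀ j, ∀ᶠ ς in l, ¬(φ ς ∈ D j ∧ F (φ ς) = g j (φ ς)) := by
      intro j
      by_contra h
      rw [not_eventually] at h
      simp only [not_not] at h
      exact hcon ⟨j, key j h⟩
    have hall : ∀ᶠ ς in l, ∀ j, ¬(φ ς ∈ D j ∧ F (φ ς) = g j (φ ς)) :=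
      eventually_all.2 hev
    have hex2 : ∀ᶠ ς in l, ∃ j, φ ς ∈ D j ∧ F (φ ς) = g j (φ ς) := by
      filter_upwards [hφU] with ς h
      obtain ⟨i, hi, heq⟩ := (hF _ h).1
      exact ⟨i, hi, heq⟩
    rcases (hall.and hex2).exists with ⟨ς, h1, j, hj⟩
    exact h1 j hj
  obtain ⟨i₀, hi₀⟩ := hex
  set S : Finset (Fin M) := Finset.univ.filter
    (fun j => (x ∈ D j ∧ d ∈ feasCone (D j) x) ∧ g j x = F x) with hSdef
  have hS : S.Nonempty := ⟨i₀, by simp [hSdef, hi₀.1.1, hi₀.1.2, hi₀.2]⟩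
  set T : Finset ℝ := S.image (fun j => df j x d) with hTdef
  have hT : T.Nonempty := hS.image _
  set L : ℝ := T.min' hT with hLdef
  have hLmem : ∃ j ∈ S, df j x d = L := by
    have h1 : L ∈ T := T.min'_mem hT
    exact Finset.mem_image.1 h1
  have hLle : ∀ j ∈ S, L ≤ df j x d := by
    intro j hj
    exact T.min'_le _ (Finset.mem_image.2 ⟨j, hj, rfl⟩)
  have hSmem : ∀ j, j ∈ S ↔ (x ∈ D j ∧ d ∈ feasCone (D j) x) ∧ g j x = F x := by
    intro j; simp [hSdef]
  refine ⟨L, ⟨?_, ?_⟩, ?_⟩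
  · obtain ⟨j, hjS, hje⟩ := hLmem
    rw [hSmem] at hjS
    exact ⟨j, hjS.1, hjS.2, hje.symm⟩
  · rintro v ⟨j, h1, h2, rfl⟩
    exact hLle j ((hSmem j).2 ⟨h1, h2⟩)
  · rw [HasDDerivAt]
    apply tendsto_order.2
    constructor
    · intro a ha
      -- lower bound part
      have hj_big : ∀ j, ∀ᶠ ς in l,
          (x ∈ D j ∧ d ∈ feasCone (D j) x) → a < (g j (φ ς) - F x) / ς := by
        intro j
        by_cases hj : x ∈ D j ∧ d ∈ feasCone (D j) x
        · by_cases hje : g j x = F x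
          · have hjS : j ∈ S := (hSmem j).2 ⟨hj, hje⟩
            have haL : a < df j x d := lt_of_lt_of_le ha (hLle j hjS)
            have ht := hq j hj.1 hj.2
            have hev := ht.eventually_const_lt haL
            filter_upwards [hev] with ς h _
            rwa [← hje]
          · have hFle : F x ≤ g j x := (hF x hx).2 ⟨j, hj.1, rfl⟩
            have hlt : F x < g j x := lt_of_le_of_ne hFle (Ne.symm hje)
            have h2 : Tendsto (fun ς : ℝ => (g j x - F x) * ς⁻¹) l atTop :=
              tendsto_inv_nhdsGT_zero.const_mul_atTop (sub_pos.2 hlt)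
            have h3 : Tendsto
                (fun ς => (g j (φ ς) - g j x) / ς + (g j x - F x) * ς⁻¹) l atTop :=
              (hq j hj.1 hj.2).add_atTop h2
            have h4 : Tendsto (fun ς => (g j (φ ς) - F x) / ς) l atTop := by
              apply h3.congr'
              filter_upwards [hςpos] with ς hςp
              field_simp
              ring
            filter_upwards [h4.eventually (eventually_gt_atTop a)] with ς h _
            exact h
        · exact Eventually.of_forall fun ς h => absurd h hj
      have hall := eventually_all.2 hj_big
      have hE2 : ∀ j, ∀ᶠ ς in l, φ ς ∈ D j → (x ∈ D j ∧ d ∈ feasCone (D j) x) := by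
        intro j
        by_cases h1 : x ∈ D j
        · by_cases h2 : d ∈ feasCone (D j) x
          · exact Eventually.of_forall fun _ _ => ⟨h1, h2⟩
          · filter_upwards [hςpos] with ς hςp hmem
            exact absurd (cone_of j h1 ς hςp hmem) h2
        · have hout : ∀ᶠ ς in l, φ ς ∉ D j :=
            hφt.eventually ((hDcl j).isOpen_compl.eventually_mem h1)
          filter_upwards [hout] with ς h hmem
          exact absurd hmem h
      have hE2all := eventually_all.2 hE2
      filter_upwards [hφU, hE2all, hall] with ς h1 h2 h3
      obtain ⟨j, hjD, hjF⟩ := (hF _ h1).1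
      have hj := h2 j hjD
      have hlt := h3 j hj
      calc a < (g j (φ ς) - F x) / ς := hlt
        _ = (F (φ ς) - F x) / ς := by rw [hjF]
    · intro a ha
      obtain ⟨i, hiS, hie⟩ := hLmem
      rw [hSmem] at hiS
      have hqt := hq i hiS.1.1 hiS.1.2
      rw [hie] at hqt
      have hev1 := hqt.eventually_lt_const ha
      obtain ⟨-, ςi, hςi, hmemi⟩ := hiS.1.2
      have hev2 : ∀ᶠ ς in l, φ ς ∈ D i := by
        have hlt : ∀ᶠ ς in l, ς < ςi := hς0.eventually_lt_const hςi
        filter_upwards [hςpos, hlt] with ς hp hltt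
        exact hmemi ς hp hltt
      filter_upwards [hev1, hev2, hφU, hςpos] with ς h1 h2 h3 hp
      have hle : F (φ ς) ≤ g i (φ ς) := (hF _ h3).2 ⟨i, h2, rfl⟩
      have hstep : (F (φ ς) - F x) / ς ≤ (g i (φ ς) - g i x) / ς := by
        rw [hiS.2]
        gcongr
      exact lt_of_le_of_lt hstep h1
end

section
/- Let f_i : ℝ^N → ℝ ∪ {+∞} for i = 1, …, M, where each f_i is continuous on its domain, convex, and directionally differentiable, and dom f_i is closed for every i. Define F(x) := min_{i ∈ [M]} f_i(x) and suppose F is continuous on dom F. Then for any x ∈ dom F there exists a neighborhood N of x such that for every y ∈ N ∩ dom F one has y − x ∈ F(x; dom F) and F(y) ≥ F(x) + F′(x; y − x). -/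
open Filter Topology

private lemma tendsto_inf'_aux {ι α : Type*} {l : Filter α} {s : Finset ι} (hs : s.Nonempty)
    {f : ι → α → ℝ} {L : ι → ℝ} (h : ∀ i ∈ s, Tendsto (f i) l (𝓝 (L i))) :
    Tendsto (fun a => s.inf' hs (fun i => f i a)) l (𝓝 (s.inf' hs L)) := by
  induction hs using Finset.Nonempty.cons_induction with
  | singleton i =>
    simp only [Finset.inf'_singleton]
    exact h i (Finset.mem_singleton_self i)
  | cons i s hi hsne ih =>
    simp only [Finset.inf'_cons (H := hsne)]
    have h1 : Tendsto (f i) l (𝓝 (L i)) := h i (by simp)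
    have h2 := ih (fun j hj => h j (by simp [hj]))
    simpa using h1.min h2

private lemma map_inf'_aux {ι : Type*} {s : Finset ι} (hs : s.Nonempty) (v : ι → ℝ)
    (f : ℝ → ℝ) (hf : ∀ a b : ℝ, f (min a b) = min (f a) (f b)) :
    f (s.inf' hs v) = s.inf' hs (fun i => f (v i)) := by
  induction hs using Finset.Nonempty.cons_induction with
  | singleton i => simp only [Finset.inf'_singleton]
  | cons i s hi hsne ih => simp only [Finset.inf'_cons (H := hsne), hf, ih]

private lemma seg_aux {n : ℕ} {C : Set (Fin n → ℝ)} (hC : Convex ℝ C) {x d : Fin n → ℝ}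
    (hx : x ∈ C) {t : ℝ} (ht0 : 0 < t) (htC : x + t • d ∈ C) {ς : ℝ}
    (h0 : 0 < ς) (hle : ς ≤ t) : x + ς • d ∈ C := by
  have hb : 0 ≤ ς / t := by positivity
  have ha : 0 ≤ 1 - ς / t := by
    have : ς / t ≤ 1 := (div_le_one ht0).2 hle
    linarith
  have h := hC hx htC ha hb (by ring)
  have heq : (1 - ς / t) • x + (ς / t) • (x + t • d) = x + ς • d := by
    have htne : t ≠ 0 := ne_of_gt ht0
    match_scalars <;> field_simp <;> ring
  rwa [heq] at h

/-- Each extended-real-valued `f_i` is encoded as a real-valued function `g i` on its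
closed domain `D i` (and `+∞` off `D i`); `f_i` is continuous on its domain, convex and
directionally differentiable.  `F = min_i f_i` is real-valued on `⋃ i, D i` and assumed
continuous there.  Then near any `x ∈ dom F`, `F(y) ≥ F(x) + F′(x; y − x)`. -/
theorem stmt3 {N M : ℕ} (hM : 0 < M)
    (D : Fin M → Set (Fin N → ℝ)) (g : Fin M → (Fin N → ℝ) → ℝ)
    (hDcl : ∀ i, IsClosed (D i))
    (hgcont : ∀ i, ContinuousOn (g i) (D i))
    (hgconv : ∀ i, ConvexOn ℝ (D i) (g i))
    (df : Fin M → (Fin N → ℝ) → (Fin N → ℝ) → ℝ)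
    (hdf : ∀ i, ∀ x ∈ D i, ∀ d ∈ feasCone (D i) x, HasDDerivAt (g i) x d (df i x d))
    (F : (Fin N → ℝ) → ℝ)
    (hF : ∀ x ∈ ⋃ i, D i, IsLeast {v : ℝ | ∃ i, x ∈ D i ∧ v = g i x} (F x))
    (hFcont : ContinuousOn F (⋃ i, D i)) :
    ∀ x ∈ ⋃ i, D i, ∃ U ∈ nhds x, ∀ y ∈ U, y ∈ ⋃ i, D i →
      (y - x ∈ feasCone (⋃ i, D i) x ∧
        ∃ L : ℝ, HasDDerivAt F x (y - x) L ∧ F x + L ≤ F y) := by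
  classical
  intro x hx
  -- the neighborhood: avoid closed sets not containing x, and keep inactive pieces inactive
  have hP : ∀ i : Fin M, ∀ᶠ z in 𝓝 x,
      (x ∉ D i → z ∉ D i) ∧ (x ∈ D i → F x < g i x → z ∈ D i → F z < g i z) := by
    intro i
    by_cases hxi : x ∈ D i
    · by_cases hlt : F x < g i x
      · have hcg : ContinuousWithinAt (g i) (D i) x := (hgcont i).continuousWithinAt hxi
        have hcF : ContinuousWithinAt F (D i) x :=
          (hFcont.mono (Set.subset_iUnion D i)).continuousWithinAt hxi
        have ht : Tendsto (fun z => g i z - F z) (𝓝[D i] x) (𝓝 (g i x - F x)) := hcg.sub hcF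
        have hev : ∀ᶠ z in 𝓝[D i] x, 0 < g i z - F z :=
          ht.eventually (eventually_gt_nhds (by linarith))
        rw [eventually_nhdsWithin_iff] at hev
        filter_upwards [hev] with z hz
        exact ⟨fun h => absurd hxi h, fun _ _ hzi => by linarith [hz hzi]⟩
      · filter_upwards with z
        exact ⟨fun h => absurd hxi h, fun _ h => absurd h hlt⟩
    · have hop : ∀ᶠ z in 𝓝 x, z ∈ (D i)ᶜ :=
        (hDcl i).isOpen_compl.mem_nhds hxi
      filter_upwards [hop] with z hz
      exact ⟨fun _ => hz, fun h => absurd h hxi⟩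
  have hU : ∀ᶠ z in 𝓝 x, ∀ i, (x ∉ D i → z ∉ D i) ∧
      (x ∈ D i → F x < g i x → z ∈ D i → F z < g i z) := eventually_all.2 hP
  refine ⟨_, hU, ?_⟩
  intro y hyU hydom
  set d := y - x with hd
  -- achiever at y is active at x
  obtain ⟨j, hyj, hFy⟩ := (hF y hydom).1
  have hxj : x ∈ D j := by
    by_contra h
    exact hyU j |>.1 h hyj
  have hgjx : g j x = F x := by
    have h1 : F x ≤ g j x := (hF x hx).2 ⟨j, hxj, rfl⟩
    by_contra h
    have hlt : F x < g j x := lt_of_le_of_ne h1 (fun e => h e.symm)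
    exact absurd hFy (ne_of_lt ((hyU j).2 hxj hlt hyj))
  have hy1 : x + (1 : ℝ) • d ∈ D j := by
    have : x + (1 : ℝ) • d = y := by rw [hd]; module
    rwa [this]
  -- active index set
  set A : Finset (Fin M) :=
    Finset.univ.filter (fun i => x ∈ D i ∧ g i x = F x ∧ ∃ ς : ℝ, 0 < ς ∧ x + ς • d ∈ D i)
    with hAdef
  have hjA : j ∈ A := by
    simp only [hAdef, Finset.mem_filter, Finset.mem_univ, true_and]
    exact ⟨hxj, hgjx, 1, one_pos, hy1⟩
  have hA : A.Nonempty := ⟨j, hjA⟩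
  have hmemA : ∀ i ∈ A, x ∈ D i ∧ g i x = F x ∧ ∃ ς : ℝ, 0 < ς ∧ x + ς • d ∈ D i := by
    intro i hi
    simpa [hAdef] using hi
  have hfeas : ∀ i ∈ A, d ∈ feasCone (D i) x := by
    intro i hi
    obtain ⟨hxi, -, t, ht0, htD⟩ := hmemA i hi
    exact ⟨hxi, t, ht0, fun ς h0 hς => seg_aux (hgconv i).1 hxi ht0 htD h0 hς.le⟩
  have hdd : ∀ i ∈ A, HasDDerivAt (g i) x d (df i x d) := fun i hi =>
    hdf i x (hmemA i hi).1 d (hfeas i hi)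
  refine ⟨⟨hx, 1, one_pos, fun ς h0 h1 =>
      Set.mem_iUnion.2 ⟨j, seg_aux (hgconv j).1 hxj one_pos hy1 h0 h1.le⟩⟩,
    A.inf' hA (fun i => df i x d), ?_, ?_⟩
  · -- directional derivative of F
    have hQ : Tendsto (fun ς : ℝ => A.inf' hA (fun i => (g i (x + ς • d) - g i x) / ς))
        (𝓝[>] (0 : ℝ)) (𝓝 (A.inf' hA (fun i => df i x d))) :=
      tendsto_inf'_aux hA (fun i hi => hdd i hi)
    refine Tendsto.congr' ?_ hQ
    have hev1 : ∀ᶠ ς : ℝ in 𝓝[>] 0, ∀ i ∈ A, x + ς • d ∈ D i := by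
      rw [eventually_all_finset]
      intro i hi
      obtain ⟨hxi, -, t, ht0, htD⟩ := hmemA i hi
      filter_upwards [Ioo_mem_nhdsGT_of_mem (Set.left_mem_Ico.2 ht0)] with ς h1
      exact seg_aux (hgconv i).1 hxi ht0 htD h1.1 h1.2.le
    have hevU : ∀ᶠ ς : ℝ in 𝓝[>] 0, ∀ i, (x ∉ D i → x + ς • d ∉ D i) ∧
        (x ∈ D i → F x < g i x → x + ς • d ∈ D i → F (x + ς • d) < g i (x + ς • d)) := by
      have hc0 : Continuous (fun ς : ℝ => x + ς • d) :=
        continuous_const.add (continuous_id.smul continuous_const)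
      have hc : Tendsto (fun ς : ℝ => x + ς • d) (𝓝[>] 0) (𝓝 x) := by
        have := (hc0.tendsto 0).mono_left (nhdsWithin_le_nhds (s := Set.Ioi (0:ℝ)))
        simpa using this
      exact hc.eventually hU
    filter_upwards [hev1, hevU, self_mem_nhdsWithin] with ς hA1 hAU h0
    have hς : (0 : ℝ) < ς := h0
    set z := x + ς • d with hz
    have hzdom : z ∈ ⋃ i, D i := Set.mem_iUnion.2 ⟨j, hA1 j hjA⟩
    have hFzle : ∀ i ∈ A, F z ≤ g i z := fun i hi => (hF z hzdom).2 ⟨i, hA1 i hi, rfl⟩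
    obtain ⟨k, hzk, hFzk⟩ := (hF z hzdom).1
    have hkA : k ∈ A := by
      have hxk : x ∈ D k := by
        by_contra h
        exact (hAU k).1 h hzk
      have hgkx : g k x = F x := by
        have h1 : F x ≤ g k x := (hF x hx).2 ⟨k, hxk, rfl⟩
        by_contra h
        have := (hAU k).2 hxk (lt_of_le_of_ne h1 (fun e => h e.symm)) hzk
        exact absurd hFzk (ne_of_lt this)
      simp only [hAdef, Finset.mem_filter, Finset.mem_univ, true_and]
      exact ⟨hxk, hgkx, ς, hς, hzk⟩
    have hFz : F z = A.inf' hA (fun i => g i z) := by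
      apply le_antisymm
      · exact Finset.le_inf' hA _ hFzle
      · rw [hFzk]
        exact Finset.inf'_le _ hkA
    have hmin : ∀ a b : ℝ, (min a b - F x) / ς = min ((a - F x) / ς) ((b - F x) / ς) := by
      intro a b
      rcases le_total a b with h | h
      · rw [min_eq_left h, min_eq_left ((div_le_div_iff_of_pos_right hς).2 (by linarith))]
      · rw [min_eq_right h, min_eq_right ((div_le_div_iff_of_pos_right hς).2 (by linarith))]
    have step1 : A.inf' hA (fun i => (g i z - g i x) / ς)
        = A.inf' hA (fun i => (g i z - F x) / ς) := by
      apply Finset.inf'_congr hA rfl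
      intro i hi
      rw [(hmemA i hi).2.1]
    rw [step1, ← map_inf'_aux hA (fun i => g i z) (fun t => (t - F x) / ς) hmin, ← hFz]
  · -- the inequality
    have hL : A.inf' hA (fun i => df i x d) ≤ df j x d := Finset.inf'_le _ hjA
    have hbound : df j x d ≤ g j y - g j x := by
      refine le_of_tendsto (hdd j hjA) ?_
      filter_upwards [Ioo_mem_nhdsGT_of_mem (Set.left_mem_Ico.2 one_pos)] with ς h1
      have hς : (0 : ℝ) < ς := h1.1
      have hcomb := (hgconv j).2 hxj hyj (show (0:ℝ) ≤ 1 - ς by linarith [h1.2])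
        (le_of_lt hς) (show 1 - ς + ς = 1 by ring)
      have heq : (1 - ς) • x + ς • y = x + ς • d := by rw [hd]; module
      rw [heq] at hcomb
      simp only [smul_eq_mul] at hcomb
      rw [div_le_iff₀ hς]
      nlinarith [hcomb]
    linarith [hL, hbound, hgjx, hFy]
end

section
/- Let f_i : ℝ^N → ℝ ∪ {+∞} for i = 1, …, M, where each f_i is continuous on its domain, convex, and directionally differentiable, and dom f_i is closed for every i. Define F(x) := min_{i ∈ [M]} f_i(x) and suppose F is continuous on dom F. If x* ∈ dom F is a d-stationary point of the problem of minimizing F, i.e., F′(x*; d) ≥ 0 for all d ∈ F(x*; dom F), then x* is a local minimizer of F. -/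
open Filter Topology

/-- Segment membership in a convex set, in "base point plus direction" form. -/
lemma seg_mem' {E : Type*} [AddCommGroup E] [Module ℝ E] {D : Set E} (hD : Convex ℝ D)
    {x z : E} (hx : x ∈ D) (hz : z ∈ D) {t : ℝ} (ht0 : 0 ≤ t) (ht1 : t ≤ 1) :
    x + t • (z - x) ∈ D := by
  have h := hD hx hz (by linarith : (0:ℝ) ≤ 1 - t) ht0 (by ring)
  have : (1 - t) • x + t • z = x + t • (z - x) := by module
  rwa [this] at h

/-- Each extended-real-valued `f_i` is encoded as a real-valued function `g i` on its
closed domain `D i` (and `+∞` off `D i`); `f_i` is continuous on its domain, convex and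
directionally differentiable.  `F = min_i f_i` is real-valued on `⋃ i, D i` and assumed
continuous there.  If `x*` is a d-stationary point of `F`, then it is a local minimizer. -/
theorem stmt4 {N M : ℕ} (hM : 0 < M)
    (D : Fin M → Set (Fin N → ℝ)) (g : Fin M → (Fin N → ℝ) → ℝ)
    (hDcl : ∀ i, IsClosed (D i))
    (hgcont : ∀ i, ContinuousOn (g i) (D i))
    (hgconv : ∀ i, ConvexOn ℝ (D i) (g i))
    (df : Fin M → (Fin N → ℝ) → (Fin N → ℝ) → ℝ)
    (hdf : ∀ i, ∀ x ∈ D i, ∀ d ∈ feasCone (D i) x, HasDDerivAt (g i) x d (df i x d))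
    (F : (Fin N → ℝ) → ℝ)
    (hF : ∀ x ∈ ⋃ i, D i, IsLeast {v : ℝ | ∃ i, x ∈ D i ∧ v = g i x} (F x))
    (hFcont : ContinuousOn F (⋃ i, D i))
    (xstar : Fin N → ℝ) (hxstar : xstar ∈ ⋃ i, D i)
    -- d-stationarity: F′(x*; d) ≥ 0 for every feasible direction d
    (hstat : ∀ d ∈ feasCone (⋃ i, D i) xstar, ∀ L : ℝ, HasDDerivAt F xstar d L → 0 ≤ L) :
    ∃ U ∈ nhds xstar, ∀ y ∈ U, y ∈ ⋃ i, D i → F xstar ≤ F y := by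
  classical
  set I : Set (Fin M) := {i | xstar ∈ D i ∧ g i xstar = F xstar} with hIdef
  obtain ⟨hFx_mem, hFx_lb⟩ := hF xstar hxstar
  -- a neighborhood on which inactive indices never attain the minimum
  have h_each : ∀ i : Fin M, ∃ V ∈ 𝓝 xstar,
      ∀ z ∈ V, z ∈ ⋃ i, D i → z ∈ D i → g i z = F z → i ∈ I := by
    intro i
    by_cases hiI : i ∈ I
    · exact ⟨Set.univ, Filter.univ_mem, fun _ _ _ _ _ => hiI⟩
    by_cases hxD : xstar ∈ D i
    · have hle : F xstar ≤ g i xstar := hFx_lb ⟨i, hxD, rfl⟩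
      have hne : g i xstar ≠ F xstar := fun h => hiI ⟨hxD, h⟩
      have hlt : F xstar < g i xstar := lt_of_le_of_ne hle (fun h => hne h.symm)
      set c : ℝ := (F xstar + g i xstar) / 2 with hc
      have hc1 : F xstar < c := by rw [hc]; linarith
      have hc2 : c < g i xstar := by rw [hc]; linarith
      have h1 : (g i) ⁻¹' Set.Ioi c ∈ 𝓝[D i] xstar := (hgcont i xstar hxD) (Ioi_mem_nhds hc2)
      have h2 : F ⁻¹' Set.Iio c ∈ 𝓝[⋃ i, D i] xstar := (hFcont xstar hxstar) (Iio_mem_nhds hc1)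
      rw [mem_nhdsWithin] at h1 h2
      obtain ⟨u1, hu1o, hxu1, hu1⟩ := h1
      obtain ⟨u2, hu2o, hxu2, hu2⟩ := h2
      refine ⟨u1 ∩ u2, (hu1o.inter hu2o).mem_nhds ⟨hxu1, hxu2⟩, ?_⟩
      intro z hz hzdom hzD hgz
      have hgt : c < g i z := hu1 ⟨hz.1, hzD⟩
      have hFlt : F z < c := hu2 ⟨hz.2, hzdom⟩
      exact absurd hgz (by linarith)
    · refine ⟨(D i)ᶜ, ((hDcl i).isOpen_compl).mem_nhds hxD, ?_⟩
      intro z hz _ hzD _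
      exact absurd hzD hz
  choose V hVmem hVkey using h_each
  refine ⟨⋂ i, V i, Filter.iInter_mem.2 hVmem, ?_⟩
  have hUmem : (⋂ i, V i) ∈ 𝓝 xstar := Filter.iInter_mem.2 hVmem
  have hUkey : ∀ z ∈ ⋂ i, V i, z ∈ ⋃ i, D i → ∀ j, z ∈ D j → g j z = F z → j ∈ I :=
    fun z hz hzdom j hzD hj => hVkey j z (Set.mem_iInter.1 hz j) hzdom hzD hj
  intro y hyU hydom
  obtain ⟨⟨i0, hyD0, hyg0⟩, hyF_lb⟩ := hF y hydom
  have hi0I : i0 ∈ I := hUkey y hyU hydom i0 hyD0 hyg0.symm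
  set d : (Fin N → ℝ) := y - xstar with hd
  have hseg0 : ∀ t : ℝ, 0 ≤ t → t ≤ 1 → xstar + t • d ∈ D i0 :=
    fun t ht0 ht1 => seg_mem' (hgconv i0).1 hi0I.1 hyD0 ht0 ht1
  -- the finset of active indices in whose domain `d` is a feasible direction
  set K : Finset (Fin M) :=
    Finset.univ.filter (fun i => i ∈ I ∧ ∃ ς : ℝ, 0 < ς ∧ xstar + ς • d ∈ D i) with hKdef
  have hi0K : i0 ∈ K := by
    rw [hKdef, Finset.mem_filter]
    exact ⟨Finset.mem_univ _, hi0I, 1, one_pos, hseg0 1 zero_le_one le_rfl⟩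
  have hKne : K.Nonempty := ⟨i0, hi0K⟩
  have hKI : ∀ i ∈ K, i ∈ I := by
    intro i hi
    rw [hKdef, Finset.mem_filter] at hi
    exact hi.2.1
  have hKfeas : ∀ i ∈ K, d ∈ feasCone (D i) xstar := by
    intro i hi
    rw [hKdef, Finset.mem_filter] at hi
    obtain ⟨-, hiI, ς0, hς0, hmem⟩ := hi
    refine ⟨hiI.1, ς0, hς0, fun ς hς hςlt => ?_⟩
    have h := seg_mem' (hgconv i).1 hiI.1 hmem
      (show (0:ℝ) ≤ ς / ς0 by positivity)
      (show ς / ς0 ≤ 1 by rw [div_le_one hς0]; linarith)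
    have heq : (ς / ς0) • ((xstar + ς0 • d) - xstar) = ς • d := by
      rw [add_sub_cancel_left, smul_smul, div_mul_cancel₀ _ (ne_of_gt hς0)]
    rwa [heq] at h
  have hKdd : ∀ i ∈ K, HasDDerivAt (g i) xstar d (df i xstar d) :=
    fun i hi => hdf i xstar (hKI i hi).1 d (hKfeas i hi)
  set L : ℝ := K.inf' hKne (fun i => df i xstar d) with hLdef
  -- eventual facts near 0⁺
  have ev1 : ∀ᶠ ς in 𝓝[>] (0:ℝ), ∀ i ∈ K, xstar + ς • d ∈ D i := by
    rw [Filter.eventually_all_finset]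
    intro i hi
    obtain ⟨hx, ς', hς', hmem⟩ := hKfeas i hi
    filter_upwards [Ioo_mem_nhdsGT_of_mem (show (0:ℝ) ∈ Set.Ico (0:ℝ) ς' from ⟨le_rfl, hς'⟩)]
      with ς hς
    exact hmem ς hς.1 hς.2
  have ev2 : ∀ᶠ ς in 𝓝[>] (0:ℝ), xstar + ς • d ∈ ⋂ i, V i := by
    have hcont : Tendsto (fun ς : ℝ => xstar + ς • d) (𝓝[>] (0:ℝ)) (𝓝 xstar) := by
      have hc : Continuous fun ς : ℝ => xstar + ς • d :=
        continuous_const.add (continuous_id.smul continuous_const)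
      have h0 := hc.tendsto 0
      simp only [zero_smul, add_zero] at h0
      exact h0.mono_left nhdsWithin_le_nhds
    exact hcont hUmem
  -- the difference quotient of F eventually equals a finite min of quotients
  have evEq : ∀ᶠ ς in 𝓝[>] (0:ℝ),
      (F (xstar + ς • d) - F xstar) / ς
        = K.inf' hKne (fun i => (g i (xstar + ς • d) - g i xstar) / ς) := by
    filter_upwards [ev1, ev2, self_mem_nhdsWithin] with ς h1 h2 hςmem
    have hςpos : (0:ℝ) < ς := hςmem
    set z := xstar + ς • d with hzdef
    have hzdom : z ∈ ⋃ i, D i := Set.mem_iUnion.2 ⟨i0, h1 i0 hi0K⟩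
    obtain ⟨⟨j, hjD, hjg⟩, hj_lb⟩ := hF z hzdom
    have hjI : j ∈ I := hUkey z h2 hzdom j hjD hjg.symm
    have hjK : j ∈ K := by
      rw [hKdef, Finset.mem_filter]
      exact ⟨Finset.mem_univ _, hjI, ς, hςpos, hjD⟩
    have hFz : F z = K.inf' hKne (fun i => g i z) := by
      apply le_antisymm
      · exact Finset.le_inf' _ _ fun i hi => hj_lb ⟨i, h1 i hi, rfl⟩
      · calc K.inf' hKne (fun i => g i z) ≤ g j z := Finset.inf'_le _ hjK
          _ = F z := hjg.symm
    rw [hFz]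
    obtain ⟨b, hbK, hb⟩ := Finset.exists_mem_eq_inf' hKne (fun i => g i z)
    obtain ⟨b', hb'K, hb'⟩ := Finset.exists_mem_eq_inf' hKne
      (fun i => (g i z - g i xstar) / ς)
    apply le_antisymm
    · rw [hb']
      have hinf : K.inf' hKne (fun i => g i z) ≤ g b' z := Finset.inf'_le _ hb'K
      have hgb' : g b' xstar = F xstar := (hKI b' hb'K).2
      rw [hgb']
      gcongr
    · rw [hb]
      have hgb : g b xstar = F xstar := (hKI b hbK).2
      rw [← hgb]
      exact Finset.inf'_le _ hbK
  have htend : Tendsto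
      (fun ς : ℝ => K.inf' hKne (fun i => (g i (xstar + ς • d) - g i xstar) / ς))
      (𝓝[>] (0:ℝ)) (𝓝 L) :=
    Filter.Tendsto.finset_inf'_nhds_apply hKne (fun i hi => hKdd i hi)
  have hDD : HasDDerivAt F xstar d L := Filter.Tendsto.congr' (evEq.mono fun ς h => h.symm) htend
  have hdfeas : d ∈ feasCone (⋃ i, D i) xstar :=
    ⟨hxstar, 1, one_pos, fun ς h0 h1 =>
      Set.mem_iUnion.2 ⟨i0, hseg0 ς (le_of_lt h0) (le_of_lt h1)⟩⟩
  have hL : 0 ≤ L := hstat d hdfeas L hDD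
  -- convexity: the directional derivative is below the slope at ς = 1
  have hdf0 : df i0 xstar d ≤ g i0 y - g i0 xstar := by
    apply le_of_tendsto (hKdd i0 hi0K)
    filter_upwards [Ioo_mem_nhdsGT_of_mem (show (0:ℝ) ∈ Set.Ico (0:ℝ) 1 from ⟨le_rfl, one_pos⟩)]
      with ς hς
    have hcv := (hgconv i0).2 hi0I.1 hyD0
      (show (0:ℝ) ≤ 1 - ς by linarith [hς.2]) (le_of_lt hς.1) (by ring)
    have heq : (1 - ς) • xstar + ς • y = xstar + ς • d := by rw [hd]; module
    rw [heq] at hcv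
    simp only [smul_eq_mul] at hcv
    rw [div_le_iff₀ hς.1]
    nlinarith [hcv]
  have hLle : L ≤ df i0 xstar d := Finset.inf'_le _ hi0K
  have h1 : g i0 xstar = F xstar := hi0I.2
  have h2 : F y = g i0 y := hyg0
  linarith
end

section
/- Consider the generalized trimmed lasso: minimize F(x₀, x₁, …, x_L) := f(x₀, …, x_L) + Σ_{l=1}^{L} γ_l T_{K_l, m_l, p_l}(D_l x_l − c_l) over (x₀, …, x_L) ∈ ℝ^{n₀} × ℝ^{n₁} × ⋯ × ℝ^{n_L}, where γ_l > 0, K_l ∈ {0, …, m_l − 1}, c_l ∈ ℝ^{m_l p_l}, D_l ∈ ℝ^{m_l p_l × n_l} is nonzero, and f is a real-valued convex function. Then a point x* is a d-stationary point of this problem (i.e., F′(x*; d) ≥ 0 for all directions d) if and only if x* is a local minimizer of F. -/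
open Filter Topology Matrix

section Aux
variable {E : Type*} [AddCommGroup E] [Module ℝ E]

private lemma convexOn_comp_line {g : E → ℝ} (hg : ConvexOn ℝ Set.univ g) (x d : E) :
    ConvexOn ℝ Set.univ (fun t : ℝ => g (x + t • d)) := by
  refine ⟨convex_univ, fun s _ t _ a b ha hb hab => ?_⟩
  obtain rfl : b = 1 - a := by linarith
  have key : x + (a * s + (1 - a) * t) • d = a • (x + s • d) + (1 - a) • (x + t • d) := by
    module
  simp only [smul_eq_mul] at key ⊢
  rw [key]
  exact hg.2 (Set.mem_univ _) (Set.mem_univ _) ha hb hab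

private lemma slope_monoOn {g : E → ℝ} (hg : ConvexOn ℝ Set.univ g) (x d : E) :
    MonotoneOn (fun ς : ℝ => (g (x + ς • d) - g x) / ς) (Set.Ioi 0) := by
  intro u hu v hv huv
  have h := (convexOn_comp_line hg x d).secant_mono (a := 0) (Set.mem_univ 0)
    (Set.mem_univ u) (Set.mem_univ v) (ne_of_gt hu) (ne_of_gt hv) huv
  simpa using h

private lemma slope_bddBelow {g : E → ℝ} (hg : ConvexOn ℝ Set.univ g) (x d : E) :
    BddBelow ((fun ς : ℝ => (g (x + ς • d) - g x) / ς) '' Set.Ioi 0) := by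
  refine ⟨(g (x + (-1 : ℝ) • d) - g x) / (-1), ?_⟩
  rintro r ⟨ς, hς, rfl⟩
  have hς' : (0:ℝ) < ς := hς
  have h := (convexOn_comp_line hg x d).secant_mono (a := 0) (Set.mem_univ 0)
    (Set.mem_univ (-1 : ℝ)) (Set.mem_univ ς) (by norm_num) (ne_of_gt hς') (by linarith)
  simpa using h

noncomputable def ddPlus (g : E → ℝ) (x d : E) : ℝ :=
  sInf ((fun ς : ℝ => (g (x + ς • d) - g x) / ς) '' Set.Ioi 0)

private lemma hasDDerivAt_ddPlus {g : E → ℝ} (hg : ConvexOn ℝ Set.univ g) (x d : E) :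
    HasDDerivAt g x d (ddPlus g x d) :=
  (slope_monoOn hg x d).tendsto_nhdsGT (slope_bddBelow hg x d)

private lemma ddPlus_le {g : E → ℝ} (hg : ConvexOn ℝ Set.univ g) (x d : E) :
    ddPlus g x d ≤ g (x + d) - g x := by
  have h1 : (g (x + (1:ℝ) • d) - g x) / 1
      ∈ (fun ς : ℝ => (g (x + ς • d) - g x) / ς) '' Set.Ioi 0 :=
    ⟨1, by norm_num, rfl⟩
  have := csInf_le (slope_bddBelow hg x d) h1
  simpa [ddPlus] using this

private lemma isMinOn_of_ddPlus {g : E → ℝ} (hg : ConvexOn ℝ Set.univ g) {x : E}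
    (h : ∀ d, 0 ≤ ddPlus g x d) (y : E) : g x ≤ g y := by
  have := (h (y - x)).trans (ddPlus_le hg x (y - x))
  simp only [add_sub_cancel] at this
  linarith

private lemma tendsto_finset_inf' {ι α : Type*} {l : Filter α} (s : Finset ι)
    {f : ι → α → ℝ} {L : ι → ℝ} :
    ∀ (hs : s.Nonempty), (∀ i ∈ s, Tendsto (f i) l (𝓝 (L i))) →
    Tendsto (fun x => s.inf' hs fun i => f i x) l (𝓝 (s.inf' hs L)) := by
  induction s using Finset.cons_induction with
  | empty => exact fun hs _ => absurd hs (by simp)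
  | cons a t ha ih =>
    intro hs h
    rcases t.eq_empty_or_nonempty with rfl | ht
    · simpa using h a (by simp)
    · have e1 : ∀ (g : ι → ℝ), (Finset.cons a t ha).inf' hs g = min (g a) (t.inf' ht g) := by
        intro g; rw [Finset.inf'_cons ht]
      simp only [e1]
      exact (h a (by simp)).min (ih ht fun i hi => h i (by simp [hi]))

private lemma sum_inf' {ι : Type*} [Fintype ι] [DecidableEq ι] {κ : ι → Type*}
    [∀ i, DecidableEq (κ i)] (S : ∀ i, Finset (κ i)) (hS : ∀ i, (S i).Nonempty)
    (h : ∀ i, κ i → ℝ) :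
    ∑ i, (S i).inf' (hS i) (h i)
      = (Fintype.piFinset S).inf' (Fintype.piFinset_nonempty.2 hS)
          (fun Λ => ∑ i, h i (Λ i)) := by
  apply le_antisymm
  · rw [Finset.le_inf'_iff]
    intro Λ hΛ
    exact Finset.sum_le_sum fun i _ =>
      Finset.inf'_le _ (Fintype.mem_piFinset.1 hΛ i)
  · choose χ hχmem hχ using fun i => Finset.exists_mem_eq_inf' (hS i) (h i)
    calc (Fintype.piFinset S).inf' _ (fun Λ => ∑ i, h i (Λ i))
        ≤ ∑ i, h i (χ i) := Finset.inf'_le _ (Fintype.mem_piFinset.2 hχmem)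
      _ = ∑ i, (S i).inf' (hS i) (h i) := by
          exact Finset.sum_congr rfl fun i _ => (hχ i).symm

private lemma convexOn_sqrt_sum_affine {q : ℕ} (A : E → (Fin q → ℝ))
    (hadd : ∀ x y, A (x + y) = A x + A y) (hsmul : ∀ (a : ℝ) x, A (a • x) = a • A x)
    (b : Fin q → ℝ) :
    ConvexOn ℝ Set.univ (fun x => Real.sqrt (∑ j, (A x j - b j) ^ 2)) := by
  have hnorm : ∀ w : Fin q → ℝ,
      Real.sqrt (∑ j, w j ^ 2) = ‖(WithLp.equiv 2 (Fin q → ℝ)).symm w‖ := by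
    intro w
    rw [EuclideanSpace.norm_eq]
    congr 1
    refine Finset.sum_congr rfl fun j _ => ?_
    rw [WithLp.equiv_symm_apply, PiLp.toLp_apply, Real.norm_eq_abs, sq_abs]
  refine ⟨convex_univ, fun x _ y _ a t ha ht hat => ?_⟩
  have harg : ∀ j, A (a • x + t • y) j - b j
      = a * (A x j - b j) + t * (A y j - b j) := by
    intro j
    have : A (a • x + t • y) j = a * A x j + t * A y j := by
      rw [hadd, hsmul, hsmul]; simp
    rw [this]; linear_combination (b j) * hat
  have keyv : (WithLp.equiv 2 (Fin q → ℝ)).symm (fun j => A (a • x + t • y) j - b j)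
      = a • (WithLp.equiv 2 (Fin q → ℝ)).symm (fun j => A x j - b j)
        + t • (WithLp.equiv 2 (Fin q → ℝ)).symm (fun j => A y j - b j) := by
    ext j
    simp only [WithLp.equiv_symm_apply, PiLp.toLp_apply, PiLp.add_apply, PiLp.smul_apply, smul_eq_mul]
    exact harg j
  simp only [smul_eq_mul]
  rw [hnorm, hnorm, hnorm, keyv]
  refine (norm_add_le _ _).trans ?_
  rw [norm_smul, norm_smul, Real.norm_eq_abs, Real.norm_eq_abs,
    abs_of_nonneg ha, abs_of_nonneg ht]

private lemma convexOn_finset_sum {ι : Type*} (s : Finset ι) {g : ι → E → ℝ} :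
    (∀ i ∈ s, ConvexOn ℝ Set.univ (g i)) →
    ConvexOn ℝ Set.univ (fun x => ∑ i ∈ s, g i x) := by
  induction s using Finset.cons_induction with
  | empty =>
    intro _
    simpa using convexOn_const (0 : ℝ) convex_univ
  | cons a t ha ih =>
    intro h
    simp only [Finset.sum_cons]
    exact (h a (by simp)).add (ih fun i hi => h i (by simp [hi]))

end Aux
/-- The trimmed (group) ℓ₁ norm `T_{K,m,p}`: the minimum of `∑_{i∈Λ} ‖z_i‖₂` over all
`Λ ⊆ [m]` with `|Λ| = m − K`, for `z` consisting of `m` blocks of dimension `p`. -/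
noncomputable def trimmedL1 {m p : ℕ} (K : ℕ) (z : Fin m × Fin p → ℝ) : ℝ :=
  sInf {s : ℝ | ∃ Λ : Finset (Fin m), Λ.card = m - K ∧
    s = ∑ i ∈ Λ, Real.sqrt (∑ j, z (i, j) ^ 2)}

section Main

variable {n0 L : ℕ} {n m p : Fin L → ℕ}

private noncomputable def gI (D : ∀ l, Matrix (Fin (m l) × Fin (p l)) (Fin (n l)) ℝ)
    (c : ∀ l, Fin (m l) × Fin (p l) → ℝ) (l : Fin L) (i : Fin (m l))
    (x : (Fin n0 → ℝ) × (∀ l, Fin (n l) → ℝ)) : ℝ :=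
  Real.sqrt (∑ j, ((D l).mulVec (x.2 l) (i, j) - c l (i, j)) ^ 2)

private noncomputable def Pen (γ : Fin L → ℝ)
    (D : ∀ l, Matrix (Fin (m l) × Fin (p l)) (Fin (n l)) ℝ)
    (c : ∀ l, Fin (m l) × Fin (p l) → ℝ) (Λ : ∀ l, Finset (Fin (m l)))
    (x : (Fin n0 → ℝ) × (∀ l, Fin (n l) → ℝ)) : ℝ :=
  ∑ l, γ l * ∑ i ∈ Λ l, gI D c l i x

private lemma gI_convex (D : ∀ l, Matrix (Fin (m l) × Fin (p l)) (Fin (n l)) ℝ)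
    (c : ∀ l, Fin (m l) × Fin (p l) → ℝ) (l : Fin L) (i : Fin (m l)) :
    ConvexOn ℝ Set.univ (gI (n0 := n0) D c l i) := by
  have hadd : ∀ x y : (Fin n0 → ℝ) × (∀ l, Fin (n l) → ℝ),
      (fun j => (D l).mulVec ((x + y).2 l) (i, j))
        = (fun j => (D l).mulVec (x.2 l) (i, j)) + fun j => (D l).mulVec (y.2 l) (i, j) := by
    intro x y; funext j; simp [Matrix.mulVec_add]
  have hsmul : ∀ (a : ℝ) (x : (Fin n0 → ℝ) × (∀ l, Fin (n l) → ℝ)),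
      (fun j => (D l).mulVec ((a • x).2 l) (i, j))
        = a • fun j => (D l).mulVec (x.2 l) (i, j) := by
    intro a x; funext j; simp [Matrix.mulVec_smul]
  exact convexOn_sqrt_sum_affine (E := (Fin n0 → ℝ) × (∀ l, Fin (n l) → ℝ)) (q := p l)
    (fun x => fun j => (D l).mulVec (x.2 l) (i, j)) hadd hsmul (fun j => c l (i, j))

private lemma Pen_convex {γ : Fin L → ℝ} (hγ : ∀ l, 0 ≤ γ l)
    (D : ∀ l, Matrix (Fin (m l) × Fin (p l)) (Fin (n l)) ℝ)
    (c : ∀ l, Fin (m l) × Fin (p l) → ℝ) (Λ : ∀ l, Finset (Fin (m l))) :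
    ConvexOn ℝ Set.univ (Pen (n0 := n0) γ D c Λ) := by
  apply convexOn_finset_sum
  intro l _
  exact (convexOn_finset_sum (Λ l) fun i _ => gI_convex D c l i).smul (hγ l)

private lemma gI_continuous (D : ∀ l, Matrix (Fin (m l) × Fin (p l)) (Fin (n l)) ℝ)
    (c : ∀ l, Fin (m l) × Fin (p l) → ℝ) (l : Fin L) (i : Fin (m l)) :
    Continuous (gI (n0 := n0) D c l i) := by
  apply Real.continuous_sqrt.comp
  apply continuous_finset_sum
  intro j _
  have h1 : Continuous fun x : (Fin n0 → ℝ) × (∀ l, Fin (n l) → ℝ) =>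
      (D l).mulVec (x.2 l) (i, j) := by
    simp only [Matrix.mulVec, dotProduct]
    exact continuous_finset_sum _ fun k _ =>
      continuous_const.mul ((continuous_apply k).comp
        ((continuous_apply l).comp continuous_snd))
  exact (h1.sub continuous_const).pow 2

private lemma Pen_continuous (γ : Fin L → ℝ)
    (D : ∀ l, Matrix (Fin (m l) × Fin (p l)) (Fin (n l)) ℝ)
    (c : ∀ l, Fin (m l) × Fin (p l) → ℝ) (Λ : ∀ l, Finset (Fin (m l))) :
    Continuous (Pen (n0 := n0) γ D c Λ) :=
  continuous_finset_sum _ fun l _ => continuous_const.mul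
    (continuous_finset_sum _ fun i _ => gI_continuous D c l i)

private lemma trimmedL1_eq {m' p' : ℕ} (K : ℕ) (z : Fin m' × Fin p' → ℝ)
    (h : (Finset.univ.powersetCard (m' - K)).Nonempty) :
    trimmedL1 K z = (Finset.univ.powersetCard (m' - K)).inf' h
      (fun Λ => ∑ i ∈ Λ, Real.sqrt (∑ j, z (i, j) ^ 2)) := by
  rw [Finset.inf'_eq_csInf_image]
  unfold trimmedL1
  congr 1
  ext s
  simp only [Set.mem_setOf_eq, Set.mem_image, Finset.mem_coe,
    Finset.mem_powersetCard_univ]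
  constructor
  · rintro ⟨Λ, h1, h2⟩; exact ⟨Λ, h1, h2.symm⟩
  · rintro ⟨Λ, h1, h2⟩; exact ⟨Λ, h1, h2.symm⟩

/-- For the generalized trimmed lasso with convex loss `f`, d-stationary points and
local minimizers coincide. -/
theorem stmt5 {n0 L : ℕ} {n m p K : Fin L → ℕ}
    (hK : ∀ l, K l < m l)
    (γ : Fin L → ℝ) (hγ : ∀ l, 0 < γ l)
    (D : ∀ l, Matrix (Fin (m l) × Fin (p l)) (Fin (n l)) ℝ) (hD : ∀ l, D l ≠ 0)
    (c : ∀ l, Fin (m l) × Fin (p l) → ℝ)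
    (f : ((Fin n0 → ℝ) × (∀ l, Fin (n l) → ℝ)) → ℝ)
    (hf : ConvexOn ℝ Set.univ f)
    (F : ((Fin n0 → ℝ) × (∀ l, Fin (n l) → ℝ)) → ℝ)
    (hF : ∀ x, F x =
      f x + ∑ l, γ l * trimmedL1 (K l) (fun ip => (D l).mulVec (x.2 l) ip - c l ip))
    (xstar : (Fin n0 → ℝ) × (∀ l, Fin (n l) → ℝ)) :
    (∀ d, ∀ Ld : ℝ, HasDDerivAt F xstar d Ld → 0 ≤ Ld) ↔ IsLocalMin F xstar := by
  classical
  have hne : ∀ l, ((Finset.univ : Finset (Fin (m l))).powersetCard (m l - K l)).Nonempty := by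
    intro l
    rw [Finset.powersetCard_nonempty, Finset.card_univ, Fintype.card_fin]
    omega
  have hT : (Fintype.piFinset fun l => (Finset.univ : Finset (Fin (m l))).powersetCard (m l - K l)).Nonempty :=
    Fintype.piFinset_nonempty.2 hne
  set T : Finset (∀ l, Finset (Fin (m l))) :=
    Fintype.piFinset (fun l => (Finset.univ : Finset (Fin (m l))).powersetCard (m l - K l)) with hTdef
  -- rewriting F as f + min of penalties
  have haddinf : ∀ (r : ℝ) {ι : Type} (s : Finset ι) (hs : s.Nonempty) (g : ι → ℝ),
      r + s.inf' hs g = s.inf' hs fun i => r + g i := by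
    intro r ι s hs g
    exact Finset.apply_inf'_eq_inf'_comp hs (fun u => r + u)
      (fun u v => by
        show _ = min _ _
        exact (Monotone.map_min (f := fun u => r + u) fun a b hab => by
          simp only []
          linarith))
  have hFeq : ∀ x, F x = f x + T.inf' hT fun Λ => Pen γ D c Λ x := by
    intro x
    rw [hF]
    congr 1
    calc ∑ l, γ l * trimmedL1 (K l) (fun ip => (D l).mulVec (x.2 l) ip - c l ip)
        = ∑ l, ((Finset.univ : Finset (Fin (m l))).powersetCard (m l - K l)).inf' (hne l)
            (fun Λ => γ l * ∑ i ∈ Λ, gI D c l i x) := by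
          refine Finset.sum_congr rfl fun l _ => ?_
          rw [trimmedL1_eq (K l) _ (hne l)]
          refine Finset.apply_inf'_eq_inf'_comp (hne l) (fun r => γ l * r)
            (fun u v => ?_)
          show _ = min _ _
          exact Monotone.map_min (f := fun r => γ l * r) fun a b hab =>
            mul_le_mul_of_nonneg_left hab (hγ l).le
      _ = T.inf' hT fun Λ => Pen γ D c Λ x := by
          rw [sum_inf' _ hne fun l Λ => γ l * ∑ i ∈ Λ, gI D c l i x]
          rfl
  have hPen_conv : ∀ Λ, ConvexOn ℝ Set.univ (fun x => f x + Pen (n0 := n0) γ D c Λ x) :=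
    fun Λ => hf.add (Pen_convex (fun l => (hγ l).le) D c Λ)
  constructor
  · -- d-stationary → local min
    intro hstat
    set Q : ℝ := T.inf' hT fun Λ => Pen γ D c Λ xstar with hQdef
    set A : Finset (∀ l, Finset (Fin (m l))) :=
      T.filter (fun Λ => Pen γ D c Λ xstar = Q) with hAdef
    have hAne : A.Nonempty := by
      obtain ⟨Λ, hΛ, hval⟩ := Finset.exists_mem_eq_inf' hT fun Λ => Pen γ D c Λ xstar
      exact ⟨Λ, Finset.mem_filter.2 ⟨hΛ, hval.symm⟩⟩
    have hAsub : A ⊆ T := Finset.filter_subset _ _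
    have hPA : ∀ Λ ∈ A, Pen γ D c Λ xstar = Q := fun Λ hΛ => (Finset.mem_filter.1 hΛ).2
    have hQle : ∀ Λ ∈ T, Q ≤ Pen γ D c Λ xstar := fun Λ hΛ => Finset.inf'_le _ hΛ
    have hAinf : (A.inf' hAne fun Λ => Pen γ D c Λ xstar) = Q := by
      apply le_antisymm
      · obtain ⟨Λ', hΛ', hval⟩ := Finset.exists_mem_eq_inf' hAne fun Λ => Pen γ D c Λ xstar
        rw [hval, hPA Λ' hΛ']
      · exact Finset.le_inf' _ _ fun Λ hΛ => (hPA Λ hΛ).ge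
    have hGA : ∀ Λ ∈ A, f xstar + Pen γ D c Λ xstar = F xstar := by
      intro Λ hΛ
      rw [hFeq, hPA Λ hΛ]
    -- every active piece is d-stationary, hence a global minimizer
    have hstatA : ∀ Λ ∈ A, ∀ y, f xstar + Pen γ D c Λ xstar ≤ f y + Pen γ D c Λ y := by
      intro Λ₀ hΛ₀ y
      refine isMinOn_of_ddPlus (hPen_conv Λ₀) (fun dvec => ?_) y
      -- show the directional derivative of F exists and equals the inf over A
      have hray : Tendsto (fun ς : ℝ => xstar + ς • dvec) (𝓝[>] (0:ℝ)) (𝓝 xstar) := by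
        have h0 : Tendsto (fun ς : ℝ => xstar + ς • dvec) (𝓝 (0:ℝ)) (𝓝 (xstar + (0:ℝ) • dvec)) :=
          (continuous_const.add (continuous_id.smul continuous_const)).tendsto 0
        simp only [zero_smul, add_zero] at h0
        exact h0.mono_left nhdsWithin_le_nhds
      have hevlt : ∀ᶠ ς in 𝓝[>] (0:ℝ), ∀ Λ ∈ T,
          (A.inf' hAne fun Λ' => Pen γ D c Λ' (xstar + ς • dvec))
            ≤ Pen γ D c Λ (xstar + ς • dvec) := by
        rw [Filter.eventually_all_finset]
        intro Λ hΛ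
        by_cases hΛA : Λ ∈ A
        · exact Filter.Eventually.of_forall fun ς => Finset.inf'_le _ hΛA
        · have hlt : Q < Pen γ D c Λ xstar :=
            lt_of_le_of_ne (hQle Λ hΛ)
              (fun h => hΛA (Finset.mem_filter.2 ⟨hΛ, h.symm⟩))
          have t1 : Tendsto (fun ς : ℝ => A.inf' hAne fun Λ' => Pen γ D c Λ' (xstar + ς • dvec))
              (𝓝[>] (0:ℝ)) (𝓝 (A.inf' hAne fun Λ' => Pen γ D c Λ' xstar)) :=
            tendsto_finset_inf' A hAne fun Λ' _ =>
              ((Pen_continuous γ D c Λ').tendsto xstar).comp hray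
          have t2 : Tendsto (fun ς : ℝ => Pen γ D c Λ (xstar + ς • dvec))
              (𝓝[>] (0:ℝ)) (𝓝 (Pen γ D c Λ xstar)) :=
            ((Pen_continuous γ D c Λ).tendsto xstar).comp hray
          exact (t1.eventually_lt t2 (by rw [hAinf]; exact hlt)).mono fun ς h => h.le
      have heq : ∀ᶠ ς in 𝓝[>] (0:ℝ), (F (xstar + ς • dvec) - F xstar) / ς
          = A.inf' hAne fun Λ =>
              ((f (xstar + ς • dvec) + Pen γ D c Λ (xstar + ς • dvec))
                - (f xstar + Pen γ D c Λ xstar)) / ς := by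
        filter_upwards [hevlt, self_mem_nhdsWithin] with ς hle hςpos
        have hςpos' : (0:ℝ) < ς := hςpos
        have hTA : (T.inf' hT fun Λ => Pen γ D c Λ (xstar + ς • dvec))
            = A.inf' hAne fun Λ => Pen γ D c Λ (xstar + ς • dvec) := by
          apply le_antisymm
          · exact Finset.le_inf' _ _ fun Λ hΛ => Finset.inf'_le _ (hAsub hΛ)
          · exact Finset.le_inf' _ _ fun Λ hΛ => hle Λ hΛ
        rw [hFeq (xstar + ς • dvec), hTA,
          haddinf (f (xstar + ς • dvec)) A hAne fun Λ => Pen γ D c Λ (xstar + ς • dvec)]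
        rw [show ((A.inf' hAne fun Λ =>
            f (xstar + ς • dvec) + Pen γ D c Λ (xstar + ς • dvec)) - F xstar) / ς
          = A.inf' hAne fun Λ =>
            ((f (xstar + ς • dvec) + Pen γ D c Λ (xstar + ς • dvec)) - F xstar) / ς from
          Finset.apply_inf'_eq_inf'_comp hAne (fun u => (u - F xstar) / ς)
            (fun u v => by
              show _ = min _ _
              exact Monotone.map_min (f := fun u => (u - F xstar) / ς)
                fun a b hab => (div_le_div_iff_of_pos_right hςpos').2 (by linarith))]
        exact Finset.inf'_congr hAne rfl fun Λ hΛ => by rw [hGA Λ hΛ]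
      have hdd : HasDDerivAt F xstar dvec
          (A.inf' hAne fun Λ => ddPlus (fun x => f x + Pen γ D c Λ x) xstar dvec) := by
        have ht : Tendsto (fun ς : ℝ => A.inf' hAne fun Λ =>
            ((f (xstar + ς • dvec) + Pen γ D c Λ (xstar + ς • dvec))
              - (f xstar + Pen γ D c Λ xstar)) / ς) (𝓝[>] (0:ℝ))
            (𝓝 (A.inf' hAne fun Λ => ddPlus (fun x => f x + Pen γ D c Λ x) xstar dvec)) :=
          tendsto_finset_inf' A hAne fun Λ _ => hasDDerivAt_ddPlus (hPen_conv Λ) xstar dvec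
        exact ht.congr' (by filter_upwards [heq] with ς h using h.symm)
      have h0 := hstat dvec _ hdd
      exact le_trans h0 (Finset.inf'_le _ hΛ₀)
    -- conclude local minimality
    have hevnbhd : ∀ᶠ y in 𝓝 xstar, ∀ Λ ∈ T,
        (A.inf' hAne fun Λ' => Pen γ D c Λ' y) ≤ Pen γ D c Λ y := by
      rw [Filter.eventually_all_finset]
      intro Λ hΛ
      by_cases hΛA : Λ ∈ A
      · exact Filter.Eventually.of_forall fun y => Finset.inf'_le _ hΛA
      · have hlt : Q < Pen γ D c Λ xstar :=
          lt_of_le_of_ne (hQle Λ hΛ)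
            (fun h => hΛA (Finset.mem_filter.2 ⟨hΛ, h.symm⟩))
        have t1 : Tendsto (fun y => A.inf' hAne fun Λ' => Pen γ D c Λ' y)
            (𝓝 xstar) (𝓝 (A.inf' hAne fun Λ' => Pen γ D c Λ' xstar)) :=
          tendsto_finset_inf' A hAne fun Λ' _ => (Pen_continuous γ D c Λ').tendsto xstar
        have t2 : Tendsto (fun y => Pen γ D c Λ y) (𝓝 xstar) (𝓝 (Pen γ D c Λ xstar)) :=
          (Pen_continuous γ D c Λ).tendsto xstar
        exact (t1.eventually_lt t2 (by rw [hAinf]; exact hlt)).mono fun y h => h.le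
    filter_upwards [hevnbhd] with y hy
    have hTA : (A.inf' hAne fun Λ => Pen γ D c Λ y) ≤ T.inf' hT fun Λ => Pen γ D c Λ y :=
      Finset.le_inf' _ _ fun Λ hΛ => hy Λ hΛ
    have h1 : F xstar ≤ f y + (A.inf' hAne fun Λ => Pen γ D c Λ y) := by
      rw [haddinf (f y) A hAne fun Λ => Pen γ D c Λ y]
      refine Finset.le_inf' _ _ fun Λ hΛ => ?_
      calc F xstar = f xstar + Pen γ D c Λ xstar := (hGA Λ hΛ).symm
        _ ≤ f y + Pen γ D c Λ y := hstatA Λ hΛ y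
    calc F xstar ≤ f y + (A.inf' hAne fun Λ => Pen γ D c Λ y) := h1
      _ ≤ f y + T.inf' hT (fun Λ => Pen γ D c Λ y) := by linarith
      _ = F y := (hFeq y).symm
  · -- local min → d-stationary
    intro hmin d Ld hdd
    have hmin' : ∀ᶠ y in 𝓝 xstar, F xstar ≤ F y := hmin
    have hray : Tendsto (fun ς : ℝ => xstar + ς • d) (𝓝[>] (0:ℝ)) (𝓝 xstar) := by
      have h0 : Tendsto (fun ς : ℝ => xstar + ς • d) (𝓝 (0:ℝ)) (𝓝 (xstar + (0:ℝ) • d)) :=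
        (continuous_const.add (continuous_id.smul continuous_const)).tendsto 0
      simp only [zero_smul, add_zero] at h0
      exact h0.mono_left nhdsWithin_le_nhds
    have hev : ∀ᶠ ς in 𝓝[>] (0:ℝ), 0 ≤ (F (xstar + ς • d) - F xstar) / ς := by
      filter_upwards [hray.eventually hmin', self_mem_nhdsWithin] with ς h2 h3
      have : (0:ℝ) < ς := h3
      exact div_nonneg (by linarith) this.le
    exact ge_of_tendsto hdd hev

end Main
end

section
/- Consider the problem: minimize F(x₁, …, x_L) := (1/2)‖b − Σ_{l∈[L]} A_l x_l‖₂² + Σ_{l∈[L]} η_l ‖x_l‖₁ + Σ_{l∈[L]} γ_l T_{K_l, n_l, 1}(x_l) over (x₁, …, x_L) ∈ ℝ^{n₁} × ⋯ × ℝ^{n_L}, where b ∈ ℝ^q, A_l ∈ ℝ^{q×n_l}, η_l ≥ 0, γ_l > 0, K_l ∈ {0, …, n_l − 1}. Then any d-stationary point (x₁*, …, x_L*) satisfies ‖x_l*‖₀ ≤ K_l for all l ∈ [L], provided γ_l > max_{j∈[n_l]} ‖a_j^{(l)}‖₂ · ‖b‖₂ − η_l holds for all l ∈ [L], where a_j^{(l)}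 denotes the j-th column of A_l and ‖x‖₀ is the number of nonzero entries of x. -/
open Filter Topology Matrix

/-- The trimmed ℓ₁ norm `T_{K,n,1}`: the sum of the `n − K` smallest absolute entries. -/
noncomputable def trimmed1 {n : ℕ} (K : ℕ) (v : Fin n → ℝ) : ℝ :=
  sInf {s : ℝ | ∃ Λ : Finset (Fin n), Λ.card = n - K ∧ s = ∑ i ∈ Λ, |v i|}

/-- ℓ₂ norm of a vector. -/
noncomputable def l2 {k : ℕ} (v : Fin k → ℝ) : ℝ := Real.sqrt (∑ j, v j ^ 2)

/-- The number of nonzero entries `‖v‖₀`. -/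
noncomputable def l0 {k : ℕ} (v : Fin k → ℝ) : ℕ :=
  (Finset.univ.filter fun i => v i ≠ 0).card

lemma trimmed1_set_eq {n K : ℕ} (v : Fin n → ℝ) :
    {s : ℝ | ∃ Λ : Finset (Fin n), Λ.card = n - K ∧ s = ∑ i ∈ Λ, |v i|}
    = ↑(((Finset.univ : Finset (Fin n)).powersetCard (n-K)).image (fun Λ => ∑ i ∈ Λ, |v i|)) := by
  ext s
  simp [Finset.mem_powersetCard_univ, eq_comm]

lemma pow_nonempty {n K : ℕ} (v : Fin n → ℝ) :
    (((Finset.univ : Finset (Fin n)).powersetCard (n-K)).image (fun Λ => ∑ i ∈ Λ, |v i|)).Nonempty := by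
  apply Finset.Nonempty.image
  rw [Finset.powersetCard_nonempty]
  simpa using Nat.sub_le n K

lemma trimmed1_eq_min' {n K : ℕ} (v : Fin n → ℝ) :
    trimmed1 K v = (((Finset.univ : Finset (Fin n)).powersetCard (n-K)).image
      (fun Λ => ∑ i ∈ Λ, |v i|)).min' (pow_nonempty v) := by
  rw [trimmed1, trimmed1_set_eq]
  exact (pow_nonempty v).csInf_eq_min'

lemma trimmed1_le {n K : ℕ} (v : Fin n → ℝ) (Λ : Finset (Fin n)) (hΛ : Λ.card = n - K) :
    trimmed1 K v ≤ ∑ i ∈ Λ, |v i| := by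
  rw [trimmed1_eq_min' v]
  apply Finset.min'_le
  exact Finset.mem_image_of_mem _ (by simp [Finset.mem_powersetCard_univ, hΛ])

lemma trimmed1_exists {n K : ℕ} (v : Fin n → ℝ) :
    ∃ Λ : Finset (Fin n), Λ.card = n - K ∧ trimmed1 K v = ∑ i ∈ Λ, |v i| := by
  rw [trimmed1_eq_min' v]
  have := (((Finset.univ : Finset (Fin n)).powersetCard (n-K)).image
    (fun Λ => ∑ i ∈ Λ, |v i|)).min'_mem (pow_nonempty v)
  rw [Finset.mem_image] at this
  obtain ⟨Λ, hΛ, hΛ2⟩ := this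
  rw [Finset.mem_powersetCard_univ] at hΛ
  exact ⟨Λ, hΛ, hΛ2.symm⟩

lemma trimmed1_nonneg {n K : ℕ} (v : Fin n → ℝ) : 0 ≤ trimmed1 K v := by
  obtain ⟨Λ, _, h⟩ := trimmed1_exists (K := K) v
  rw [h]
  exact Finset.sum_nonneg fun i _ => abs_nonneg _

lemma trimmed1_smul {n K : ℕ} (v : Fin n → ℝ) (c : ℝ) (hc : 0 ≤ c) :
    trimmed1 K (fun i => c * v i) = c * trimmed1 K v := by
  apply le_antisymm
  · obtain ⟨Λ, hΛ, hval⟩ := trimmed1_exists (K := K) v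
    calc trimmed1 K (fun i => c * v i) ≤ ∑ i ∈ Λ, |c * v i| := trimmed1_le _ Λ hΛ
    _ = c * trimmed1 K v := by
        rw [hval, Finset.mul_sum]
        exact Finset.sum_congr rfl fun i _ => by rw [abs_mul, abs_of_nonneg hc]
  · obtain ⟨Λ, hΛ, hval⟩ := trimmed1_exists (K := K) (fun i => c * v i)
    rw [hval]
    calc c * trimmed1 K v ≤ c * ∑ i ∈ Λ, |v i| :=
          mul_le_mul_of_nonneg_left (trimmed1_le v Λ hΛ) hc
    _ = ∑ i ∈ Λ, |c * v i| := by
        rw [Finset.mul_sum]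
        exact Finset.sum_congr rfl fun i _ => by rw [abs_mul, abs_of_nonneg hc]

lemma trimmed1_perturb {n K : ℕ} (v : Fin n → ℝ) (j : Fin n)
    (Λs : Finset (Fin n)) (hΛs : Λs.card = n - K) (hopt : trimmed1 K v = ∑ i ∈ Λs, |v i|)
    (hj : j ∈ Λs) (ς : ℝ) (hς0 : 0 ≤ ς) (hς1 : ς ≤ 1)
    (w : Fin n → ℝ) (hwj : w j = (1 - ς) * v j) (hwi : ∀ i, i ≠ j → w i = v i) :
    trimmed1 K w = trimmed1 K v - ς * |v j| := by
  have habs : |w j| = |v j| - ς * |v j| := by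
    rw [hwj, abs_mul, abs_of_nonneg (by linarith : (0:ℝ) ≤ 1 - ς)]
    ring
  have hsum : ∀ Λ : Finset (Fin n), j ∈ Λ → ∑ i ∈ Λ, |w i| = ∑ i ∈ Λ, |v i| - ς * |v j| := by
    intro Λ hjΛ
    rw [← Finset.sum_erase_add _ _ hjΛ, ← Finset.sum_erase_add _ (fun i => |v i|) hjΛ, habs]
    have : ∑ i ∈ Λ.erase j, |w i| = ∑ i ∈ Λ.erase j, |v i| :=
      Finset.sum_congr rfl fun i hi => by rw [hwi i (Finset.ne_of_mem_erase hi)]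
    rw [this]; ring
  apply le_antisymm
  · calc trimmed1 K w ≤ ∑ i ∈ Λs, |w i| := trimmed1_le _ Λs hΛs
    _ = trimmed1 K v - ς * |v j| := by rw [hsum Λs hj, ← hopt]
  · obtain ⟨Λ, hΛ, hval⟩ := trimmed1_exists (K := K) w
    rw [hval]
    by_cases hjΛ : j ∈ Λ
    · rw [hsum Λ hjΛ]
      have := trimmed1_le v Λ hΛ
      linarith [hopt ▸ this]
    · have h1 : ∑ i ∈ Λ, |w i| = ∑ i ∈ Λ, |v i| :=
        Finset.sum_congr rfl fun i hi => by rw [hwi i (fun h => hjΛ (h ▸ hi))]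
      have h2 := trimmed1_le v Λ hΛ
      have h3 : 0 ≤ ς * |v j| := mul_nonneg hς0 (abs_nonneg _)
      rw [h1]
      linarith [hopt ▸ h2]

lemma hasDDeriv_of_quadratic {E : Type*} [AddCommMonoid E] [SMul ℝ E]
    (f : E → ℝ) (x d : E) (c e : ℝ)
    (h : ∀ ς : ℝ, ς ∈ Set.Ioo (0:ℝ) 1 → f (x + ς • d) = f x + ς * c + ς^2 * e) :
    HasDDerivAt f x d c := by
  have hmem : Set.Ioo (0:ℝ) 1 ∈ nhdsWithin (0:ℝ) (Set.Ioi 0) :=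
    Ioo_mem_nhdsGT_of_mem (by norm_num)
  have heq : (fun ς : ℝ => c + ς * e) =ᶠ[nhdsWithin (0:ℝ) (Set.Ioi 0)]
      (fun ς : ℝ => (f (x + ς • d) - f x) / ς) := by
    filter_upwards [hmem] with ς hς
    rw [h ς hς]
    have hne : ς ≠ 0 := ne_of_gt hς.1
    field_simp
    ring
  have : Tendsto (fun ς : ℝ => c + ς * e) (nhdsWithin (0:ℝ) (Set.Ioi 0)) (nhds c) := by
    have h2 : Tendsto (fun ς : ℝ => c + ς * e) (nhds 0) (nhds (c + 0 * e)) :=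
      (continuous_const.add (continuous_id.mul continuous_const)).tendsto 0
    rw [zero_mul, add_zero] at h2
    exact h2.mono_left nhdsWithin_le_nhds
  exact Tendsto.congr' heq this

/-- Exact penalty at d-stationary points of the trimmed lasso with least-squares loss
and ℓ₁ regularization. -/
theorem stmt10 {q L : ℕ} {n K : Fin L → ℕ}
    (hK : ∀ l, K l < n l)
    (η : Fin L → ℝ) (hη : ∀ l, 0 ≤ η l)
    (γ : Fin L → ℝ) (hγ : ∀ l, 0 < γ l)
    (b : Fin q → ℝ) (A : ∀ l, Matrix (Fin q) (Fin (n l)) ℝ)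
    (F : (∀ l, Fin (n l) → ℝ) → ℝ)
    (hF : ∀ x, F x =
      (1 / 2) * ∑ i, (b i - ∑ l, (A l).mulVec (x l) i) ^ 2 +
        ∑ l, η l * ∑ j, |x l j| +
        ∑ l, γ l * trimmed1 (K l) (x l))
    (xstar : ∀ l, Fin (n l) → ℝ)
    -- x* is a d-stationary point of F
    (hstat : ∀ d, ∀ Ld : ℝ, HasDDerivAt F xstar d Ld → 0 ≤ Ld)
    -- thresholds: γ_l > max_{j} ‖a_j^{(l)}‖₂ ‖b‖₂ − η_l
    (hthr : ∀ l, ∀ j : Fin (n l), γ l > l2 (fun i => A l i j) * l2 b - η l) :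
    ∀ l, l0 (xstar l) ≤ K l := by
  -- notation
  set u : Fin q → ℝ := fun i => ∑ l, (A l).mulVec (xstar l) i with hu
  set r : Fin q → ℝ := fun i => b i - u i with hr
  set S1 : ℝ := ∑ l, η l * ∑ j, |xstar l j| with hS1
  set S2 : ℝ := ∑ l, γ l * trimmed1 (K l) (xstar l) with hS2
  -- Step A: at a stationary point, ⟨r, u⟩ ≥ S1 + S2 ≥ 0, hence ∑ r² ≤ ∑ b²
  have keyA : 0 ≤ (∑ i, r i * u i) - S1 - S2 := by
    apply hstat (-xstar)
    apply hasDDeriv_of_quadratic F xstar (-xstar) _ ((1/2) * ∑ i, u i ^ 2)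
    intro ς hς
    have hς1 : (0:ℝ) ≤ 1 - ς := by linarith [hς.2]
    have hpt : ∀ l, (xstar + ς • (-xstar)) l = fun k => (1 - ς) * xstar l k := by
      intro l; funext k
      simp only [Pi.add_apply, Pi.smul_apply, Pi.neg_apply, smul_eq_mul]
      ring
    rw [hF, hF]
    have hmv : ∀ i, ∑ l, (A l).mulVec ((xstar + ς • (-xstar)) l) i = (1 - ς) * u i := by
      intro i
      rw [hu, Finset.mul_sum]
      apply Finset.sum_congr rfl
      intro l _
      rw [hpt l]
      simp only [Matrix.mulVec, dotProduct]
      rw [Finset.mul_sum]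
      exact Finset.sum_congr rfl fun k _ => by ring
    have hquad : ∑ i, (b i - ∑ l, (A l).mulVec ((xstar + ς • (-xstar)) l) i) ^ 2
        = ∑ i, (b i - ∑ l, (A l).mulVec (xstar l) i) ^ 2
          + ς * (2 * ∑ i, r i * u i) + ς ^ 2 * ∑ i, u i ^ 2 := by
      have h1 : ∀ i, (b i - ∑ l, (A l).mulVec ((xstar + ς • (-xstar)) l) i) ^ 2
          = (b i - ∑ l, (A l).mulVec (xstar l) i) ^ 2
            + 2 * (r i * u i) * ς + (u i ^ 2) * ς ^ 2 := by
        intro i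
        rw [hmv i]
        have hbu : b i - ∑ l, (A l).mulVec (xstar l) i = r i := by rw [hr]
        have : b i - (1 - ς) * u i = r i + ς * u i := by rw [hr]; ring
        rw [this, hbu]
        ring
      rw [Finset.sum_congr rfl fun i _ => h1 i, Finset.sum_add_distrib,
        Finset.sum_add_distrib, ← Finset.sum_mul, ← Finset.sum_mul, ← Finset.mul_sum]
      ring
    have hl1 : ∑ l, η l * ∑ k, |(xstar + ς • (-xstar)) l k| = (1 - ς) * S1 := by
      rw [hS1, Finset.mul_sum]
      apply Finset.sum_congr rfl
      intro l _
      rw [hpt l]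
      have : ∑ k, |(1 - ς) * xstar l k| = (1 - ς) * ∑ k, |xstar l k| := by
        rw [Finset.mul_sum]
        exact Finset.sum_congr rfl fun k _ => by rw [abs_mul, abs_of_nonneg hς1]
      rw [this]; ring
    have htr : ∑ l, γ l * trimmed1 (K l) ((xstar + ς • (-xstar)) l) = (1 - ς) * S2 := by
      rw [hS2, Finset.mul_sum]
      apply Finset.sum_congr rfl
      intro l _
      rw [hpt l, trimmed1_smul _ _ hς1]
      ring
    rw [hquad, hl1, htr]
    ring
  have hS1nn : 0 ≤ S1 :=
    Finset.sum_nonneg fun l _ => mul_nonneg (hη l)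
      (Finset.sum_nonneg fun k _ => abs_nonneg _)
  have hS2nn : 0 ≤ S2 :=
    Finset.sum_nonneg fun l _ => mul_nonneg (hγ l).le (trimmed1_nonneg _)
  have hru : 0 ≤ ∑ i, r i * u i := by linarith
  have hrb : ∑ i, r i ^ 2 ≤ ∑ i, b i ^ 2 := by
    have hb : ∀ i, b i ^ 2 = r i ^ 2 + 2 * (r i * u i) + u i ^ 2 := by
      intro i; rw [hr]; ring
    rw [Finset.sum_congr rfl fun i _ => hb i, Finset.sum_add_distrib, Finset.sum_add_distrib,
      ← Finset.mul_sum]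
    have := Finset.sum_nonneg (fun i (_ : i ∈ (Finset.univ : Finset (Fin q))) => sq_nonneg (u i))
    linarith
  -- Step B: main argument, by contradiction block by block
  intro l₀
  by_contra hcon
  push_neg at hcon
  -- pick an optimal Λ and a nonzero entry j ∈ Λ
  obtain ⟨Λs, hΛs, hopt⟩ := trimmed1_exists (K := K l₀) (xstar l₀)
  have hex : ∃ j ∈ Λs, xstar l₀ j ≠ 0 := by
    by_contra hall
    push_neg at hall
    have hsub : Λs ⊆ Finset.univ.filter fun i => xstar l₀ i = 0 := by
      intro i hi
      simp only [Finset.mem_filter, Finset.mem_univ, true_and]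
      exact hall i hi
    have hcard := Finset.card_le_card hsub
    have h0 : (Finset.univ.filter fun i => xstar l₀ i = 0).card
        = n l₀ - l0 (xstar l₀) := by
      have := Finset.card_filter_add_card_filter_not
        (s := (Finset.univ : Finset (Fin (n l₀)))) (p := fun i => xstar l₀ i = 0)
      simp only [Finset.card_univ, Fintype.card_fin] at this
      have hl0 : (Finset.univ.filter fun i => ¬ xstar l₀ i = 0).card = l0 (xstar l₀) := rfl
      omega
    have hl0n : l0 (xstar l₀) ≤ n l₀ := by
      rw [l0]
      calc (Finset.univ.filter fun i => xstar l₀ i ≠ 0).card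
          ≤ (Finset.univ : Finset (Fin (n l₀))).card := Finset.card_le_card (Finset.filter_subset _ _)
      _ = n l₀ := by simp
    rw [hΛs, h0] at hcard
    omega
  obtain ⟨j, hjΛ, hjne⟩ := hex
  -- direction zeroing out entry j of block l₀
  set xj : ℝ := xstar l₀ j with hxj
  set a : Fin q → ℝ := fun i => A l₀ i j with ha
  set d : ∀ l, Fin (n l) → ℝ := Pi.single l₀ (Pi.single j (-xj)) with hd
  have keyB : 0 ≤ xj * (∑ i, r i * a i) - η l₀ * |xj| - γ l₀ * |xj| := by
    apply hstat d
    apply hasDDeriv_of_quadratic F xstar d _ ((1/2) * (xj^2 * ∑ i, a i ^ 2))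
    intro ς hς
    have hς0 : (0:ℝ) ≤ ς := hς.1.le
    have hς1 : ς ≤ 1 := hς.2.le
    -- pointwise description of the perturbed point
    have hptne : ∀ l, l ≠ l₀ → (xstar + ς • d) l = xstar l := by
      intro l hl
      funext k
      simp only [Pi.add_apply, Pi.smul_apply, hd, Pi.single_eq_of_ne hl, smul_eq_mul]
      simp
    have hpt0 : (xstar + ς • d) l₀ = fun k => xstar l₀ k + ς * (Pi.single j (-xj) : Fin (n l₀) → ℝ) k := by
      funext k
      simp only [Pi.add_apply, Pi.smul_apply, hd, Pi.single_eq_same, smul_eq_mul]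
    rw [hF, hF]
    -- quadratic part
    have hmv0 : ∀ i, (A l₀).mulVec ((xstar + ς • d) l₀) i
        = (A l₀).mulVec (xstar l₀) i - ς * (xj * a i) := by
      intro i
      rw [hpt0]
      simp only [Matrix.mulVec, dotProduct]
      have h1 : ∀ k, A l₀ i k * (xstar l₀ k + ς * (Pi.single j (-xj) : Fin (n l₀) → ℝ) k)
          = A l₀ i k * xstar l₀ k + ς * (A l₀ i k * (Pi.single j (-xj) : Fin (n l₀) → ℝ) k) :=
        fun k => by ring
      rw [Finset.sum_congr rfl fun k _ => h1 k, Finset.sum_add_distrib, ← Finset.mul_sum]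
      have h2 : ∑ k, A l₀ i k * (Pi.single j (-xj) : Fin (n l₀) → ℝ) k = a i * (-xj) := by
        rw [Finset.sum_eq_single j]
        · simp [ha, Pi.single_eq_same]
        · intro k _ hk; rw [Pi.single_eq_of_ne hk, mul_zero]
        · intro h; exact absurd (Finset.mem_univ j) h
      rw [h2]; ring
    have hmv : ∀ i, ∑ l, (A l).mulVec ((xstar + ς • d) l) i = u i - ς * (xj * a i) := by
      intro i
      have hsplit : ∀ l ∈ (Finset.univ : Finset (Fin L)), (A l).mulVec ((xstar + ς • d) l) i
          = (A l).mulVec (xstar l) i + (if l = l₀ then -(ς * (xj * a i)) else 0) := by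
        intro l _
        by_cases hl : l = l₀
        · rw [hl, if_pos rfl, hmv0 i]; ring
        · rw [hptne l hl, if_neg hl, add_zero]
      rw [Finset.sum_congr rfl hsplit, Finset.sum_add_distrib, hu,
        Finset.sum_ite_eq' Finset.univ l₀ fun _ => -(ς * (xj * a i))]
      simp only [Finset.mem_univ, if_true]
      ring
    have hquad : ∑ i, (b i - ∑ l, (A l).mulVec ((xstar + ς • d) l) i) ^ 2
        = ∑ i, (b i - ∑ l, (A l).mulVec (xstar l) i) ^ 2
          + ς * (2 * (xj * ∑ i, r i * a i)) + ς ^ 2 * (xj ^ 2 * ∑ i, a i ^ 2) := by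
      have h1 : ∀ i, (b i - ∑ l, (A l).mulVec ((xstar + ς • d) l) i) ^ 2
          = (b i - ∑ l, (A l).mulVec (xstar l) i) ^ 2
            + 2 * (xj * (r i * a i)) * ς + (xj ^ 2 * a i ^ 2) * ς ^ 2 := by
        intro i
        rw [hmv i]
        have hbu : b i - ∑ l, (A l).mulVec (xstar l) i = r i := by rw [hr]
        have : b i - (u i - ς * (xj * a i)) = r i + ς * (xj * a i) := by rw [hr]; ring
        rw [this, hbu]
        ring
      rw [Finset.sum_congr rfl fun i _ => h1 i, Finset.sum_add_distrib, Finset.sum_add_distrib,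
        ← Finset.sum_mul, ← Finset.sum_mul]
      have e1 : ∑ i, 2 * (xj * (r i * a i)) = 2 * (xj * ∑ i, r i * a i) := by
        rw [Finset.mul_sum, Finset.mul_sum]
      have e2 : ∑ i, xj ^ 2 * a i ^ 2 = xj ^ 2 * ∑ i, a i ^ 2 :=
        (Finset.mul_sum _ _ _).symm
      rw [e1, e2]
      ring
    -- ℓ₁ part
    have habsj : |xstar l₀ j + ς * (Pi.single j (-xj) : Fin (n l₀) → ℝ) j| = |xj| - ς * |xj| := by
      rw [Pi.single_eq_same, hxj]
      have : xstar l₀ j + ς * -(xstar l₀ j) = (1 - ς) * xstar l₀ j := by ring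
      rw [this, abs_mul, abs_of_nonneg (by linarith : (0:ℝ) ≤ 1 - ς)]
      ring
    have hl10 : ∑ k, |(xstar + ς • d) l₀ k| = (∑ k, |xstar l₀ k|) - ς * |xj| := by
      rw [hpt0]
      rw [← Finset.sum_erase_add _ _ (Finset.mem_univ j),
        ← Finset.sum_erase_add _ (fun k => |xstar l₀ k|) (Finset.mem_univ j), habsj]
      have : ∑ k ∈ Finset.univ.erase j, |xstar l₀ k + ς * (Pi.single j (-xj) : Fin (n l₀) → ℝ) k|
          = ∑ k ∈ Finset.univ.erase j, |xstar l₀ k| := by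
        apply Finset.sum_congr rfl
        intro k hk
        rw [Pi.single_eq_of_ne (Finset.ne_of_mem_erase hk), mul_zero, add_zero]
      rw [this]; ring
    have hl1 : ∑ l, η l * ∑ k, |(xstar + ς • d) l k|
        = S1 - ς * (η l₀ * |xj|) := by
      have hsplit : ∀ l ∈ (Finset.univ : Finset (Fin L)), η l * ∑ k, |(xstar + ς • d) l k|
          = η l * ∑ k, |xstar l k| + (if l = l₀ then -(ς * (η l₀ * |xj|)) else 0) := by
        intro l _
        by_cases hl : l = l₀
        · rw [hl, if_pos rfl, hl10]; ring
        · rw [hptne l hl, if_neg hl, add_zero]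
      rw [Finset.sum_congr rfl hsplit, Finset.sum_add_distrib, hS1,
        Finset.sum_ite_eq' Finset.univ l₀ fun _ => -(ς * (η l₀ * |xj|))]
      simp only [Finset.mem_univ, if_true]
      ring
    -- trimmed part
    have htrl₀ : trimmed1 (K l₀) ((xstar + ς • d) l₀)
        = trimmed1 (K l₀) (xstar l₀) - ς * |xj| := by
      have hxjabs : |xstar l₀ j| = |xj| := by rw [hxj]
      rw [← hxjabs]
      apply trimmed1_perturb (xstar l₀) j Λs hΛs hopt hjΛ ς hς0 hς1
      · rw [hpt0]
        simp only [Pi.single_eq_same, hxj]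
        ring
      · intro i hi
        rw [hpt0]
        simp only [Pi.single_eq_of_ne hi, mul_zero, add_zero]
    have htr : ∑ l, γ l * trimmed1 (K l) ((xstar + ς • d) l)
        = S2 - ς * (γ l₀ * |xj|) := by
      have hsplit : ∀ l ∈ (Finset.univ : Finset (Fin L)), γ l * trimmed1 (K l) ((xstar + ς • d) l)
          = γ l * trimmed1 (K l) (xstar l) + (if l = l₀ then -(ς * (γ l₀ * |xj|)) else 0) := by
        intro l _
        by_cases hl : l = l₀
        · rw [hl, if_pos rfl, htrl₀]; ring
        · rw [hptne l hl, if_neg hl, add_zero]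
      rw [Finset.sum_congr rfl hsplit, Finset.sum_add_distrib, hS2,
        Finset.sum_ite_eq' Finset.univ l₀ fun _ => -(ς * (γ l₀ * |xj|))]
      simp only [Finset.mem_univ, if_true]
      ring
    rw [hquad, hl1, htr]
    ring
  -- Step C: Cauchy–Schwarz and the threshold give a contradiction
  have hxjpos : 0 < |xj| := abs_pos.mpr hjne
  have hCS : xj * (∑ i, r i * a i) ≤ |xj| * (l2 a * l2 b) := by
    have h1 : xj * (∑ i, r i * a i) ≤ |xj * (∑ i, r i * a i)| := le_abs_self _
    have h2 : |xj * ∑ i, r i * a i| = |xj| * |∑ i, r i * a i| := abs_mul _ _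
    have h3 : |∑ i, r i * a i| ≤ Real.sqrt (∑ i, r i ^ 2) * Real.sqrt (∑ i, a i ^ 2) := by
      rw [← Real.sqrt_sq_eq_abs, ← Real.sqrt_mul (Finset.sum_nonneg fun i _ => sq_nonneg _)]
      exact Real.sqrt_le_sqrt (Finset.sum_mul_sq_le_sq_mul_sq _ _ _)
    have h4 : Real.sqrt (∑ i, r i ^ 2) ≤ l2 b := by
      rw [l2]
      exact Real.sqrt_le_sqrt hrb
    have h5 : |∑ i, r i * a i| ≤ l2 b * l2 a := by
      calc |∑ i, r i * a i| ≤ Real.sqrt (∑ i, r i ^ 2) * Real.sqrt (∑ i, a i ^ 2) := h3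
      _ ≤ l2 b * l2 a := by
          apply mul_le_mul h4 (le_refl _) (Real.sqrt_nonneg _)
          rw [l2]; exact Real.sqrt_nonneg _
    calc xj * (∑ i, r i * a i) ≤ |xj| * |∑ i, r i * a i| := by rw [← h2]; exact h1
    _ ≤ |xj| * (l2 b * l2 a) := mul_le_mul_of_nonneg_left h5 (abs_nonneg _)
    _ = |xj| * (l2 a * l2 b) := by ring
  have hfin : η l₀ * |xj| + γ l₀ * |xj| ≤ |xj| * (l2 a * l2 b) := by linarith
  have hthr' := hthr l₀ j
  rw [← ha] at hthr'
  nlinarith [hxjpos, hthr', hfin]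
end

section
/- Let b ∈ ℝ^q and A ∈ ℝ^{q×n} with columns a₁, …, a_n, and consider the sparse linear regression problem with power 1: minimize F(x) := ‖b − Ax‖₂ + γ T_{K,n,1}(x) over x ∈ ℝⁿ, with γ > 0 and K ∈ {0, …, n−1}. If γ > max_{j∈[n]} ‖a_j‖₂, then every d-stationary point x* of this problem satisfies T_{K,n,1}(x*) = 0, i.e., ‖x*‖₀ ≤ K. -/
open Filter Topology Matrix

lemma trimSet_finite {n K : ℕ} (v : Fin n → ℝ) :
    {s : ℝ | ∃ Λ : Finset (Fin n), Λ.card = n - K ∧ s = ∑ i ∈ Λ, |v i|}.Finite := by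
  apply Set.Finite.subset (Set.finite_range (fun Λ : Finset (Fin n) => ∑ i ∈ Λ, |v i|))
  rintro s ⟨Λ, -, rfl⟩; exact ⟨Λ, rfl⟩

lemma trimSet_nonempty {n K : ℕ} (v : Fin n → ℝ) :
    {s : ℝ | ∃ Λ : Finset (Fin n), Λ.card = n - K ∧ s = ∑ i ∈ Λ, |v i|}.Nonempty := by
  obtain ⟨Λ, -, hcard⟩ := Finset.exists_subset_card_eq
    (show n - K ≤ (Finset.univ : Finset (Fin n)).card by simp)
  exact ⟨_, Λ, hcard, rfl⟩

lemma trim_spec {n K : ℕ} (v : Fin n → ℝ) :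
    ∃ Λ : Finset (Fin n), Λ.card = n - K ∧ trimmed1 K v = ∑ i ∈ Λ, |v i| ∧
      ∀ Λ' : Finset (Fin n), Λ'.card = n - K → trimmed1 K v ≤ ∑ i ∈ Λ', |v i| := by
  obtain ⟨Λ, hΛ, hsum⟩ := (trimSet_nonempty (K := K) v).csInf_mem (trimSet_finite v)
  exact ⟨Λ, hΛ, hsum, fun Λ' h' => csInf_le (trimSet_finite v).bddBelow ⟨Λ', h', rfl⟩⟩

lemma trim_shift {n K : ℕ} (v w : Fin n → ℝ) (j : Fin n) (ς : ℝ) (hς : 0 ≤ ς)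
    (Λ₀ : Finset (Fin n)) (hcard : Λ₀.card = n - K) (hjΛ : j ∈ Λ₀)
    (hmin : trimmed1 K v = ∑ i ∈ Λ₀, |v i|)
    (hlb : ∀ Λ' : Finset (Fin n), Λ'.card = n - K → trimmed1 K v ≤ ∑ i ∈ Λ', |v i|)
    (hw : ∀ i, i ≠ j → w i = v i) (hwj : |w j| = |v j| - ς) :
    trimmed1 K w = trimmed1 K v - ς := by
  have key : ∀ Λ : Finset (Fin n), j ∈ Λ → ∑ i ∈ Λ, |w i| = ∑ i ∈ Λ, |v i| - ς := by
    intro Λ hj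
    rw [← Finset.add_sum_erase _ _ hj, ← Finset.add_sum_erase _ (fun i => |v i|) hj, hwj,
      Finset.sum_congr rfl (fun i hi => by rw [hw i (Finset.ne_of_mem_erase hi)])]
    ring
  have key2 : ∀ Λ : Finset (Fin n), j ∉ Λ → ∑ i ∈ Λ, |w i| = ∑ i ∈ Λ, |v i| :=
    fun Λ hj => Finset.sum_congr rfl fun i hi => by rw [hw i (fun h => hj (h ▸ hi))]
  apply le_antisymm
  · calc trimmed1 K w ≤ ∑ i ∈ Λ₀, |w i| :=
          csInf_le (trimSet_finite w).bddBelow ⟨Λ₀, hcard, rfl⟩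
      _ = trimmed1 K v - ς := by rw [key Λ₀ hjΛ, hmin]
  · apply le_csInf (trimSet_nonempty w)
    rintro s ⟨Λ, hΛ, rfl⟩
    by_cases hj : j ∈ Λ
    · rw [key Λ hj]; exact sub_le_sub_right (hlb Λ hΛ) ς
    · rw [key2 Λ hj]; linarith [hlb Λ hΛ]

lemma trimmed1_eq_zero {n K : ℕ} (v : Fin n → ℝ) (h0 : l0 v ≤ K) :
    trimmed1 K v = 0 := by
  have h2 : (Finset.univ.filter fun i => v i = 0).card + l0 v = n := by
    have := Finset.card_filter_add_card_filter_not
      (s := (Finset.univ : Finset (Fin n))) (p := fun i => v i = 0)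
    simpa [l0, Finset.card_univ] using this
  obtain ⟨Λ, hΛsub, hΛcard⟩ := Finset.exists_subset_card_eq
    (show n - K ≤ (Finset.univ.filter fun i => v i = 0).card by omega)
  have hzero : (0:ℝ) ∈ {s : ℝ | ∃ Λ : Finset (Fin n), Λ.card = n - K ∧ s = ∑ i ∈ Λ, |v i|} := by
    refine ⟨Λ, hΛcard, ?_⟩
    rw [Finset.sum_congr rfl fun i hi => by
      rw [(Finset.mem_filter.mp (hΛsub hi)).2, abs_zero]]
    simp
  apply le_antisymm (csInf_le (trimSet_finite v).bddBelow hzero)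
  apply le_csInf (trimSet_nonempty v)
  rintro s ⟨Λ', -, rfl⟩
  exact Finset.sum_nonneg fun i _ => abs_nonneg _

/-- Exact penalty for sparse linear regression with power 1. -/
theorem stmt11 {q n : ℕ} {K : ℕ} (hK : K < n)
    (γ : ℝ) (hγ : 0 < γ)
    (b : Fin q → ℝ) (A : Matrix (Fin q) (Fin n) ℝ)
    (F : (Fin n → ℝ) → ℝ)
    (hF : ∀ x, F x = l2 (fun i => b i - A.mulVec x i) + γ * trimmed1 K x)
    -- γ > max_j ‖a_j‖₂
    (hthr : ∀ j : Fin n, γ > l2 (fun i => A i j))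
    (xstar : Fin n → ℝ)
    -- x* is a d-stationary point of F
    (hstat : ∀ d, ∀ Ld : ℝ, HasDDerivAt F xstar d Ld → 0 ≤ Ld) :
    trimmed1 K xstar = 0 ∧ l0 xstar ≤ K := by
  suffices h : l0 xstar ≤ K from ⟨trimmed1_eq_zero xstar h, h⟩
  by_contra hcon
  push_neg at hcon
  obtain ⟨Λ₀, hcard, hmin, hlb⟩ := trim_spec (K := K) xstar
  -- find a nonzero coordinate in the minimizing set
  have hjex : ∃ j ∈ Λ₀, xstar j ≠ 0 := by
    by_contra hall
    push_neg at hall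
    have hsub : Λ₀ ⊆ Finset.univ.filter fun i => xstar i = 0 := fun i hi =>
      Finset.mem_filter.mpr ⟨Finset.mem_univ i, hall i hi⟩
    have h1 := Finset.card_le_card hsub
    have h2 : (Finset.univ.filter fun i => xstar i = 0).card + l0 xstar = n := by
      have := Finset.card_filter_add_card_filter_not
        (s := (Finset.univ : Finset (Fin n))) (p := fun i => xstar i = 0)
      simpa [l0, Finset.card_univ] using this
    omega
  obtain ⟨j, hjΛ, hxj⟩ := hjex
  obtain ⟨s, hs2, habs⟩ : ∃ s : ℝ, s ^ 2 = 1 ∧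
      ∀ ς : ℝ, 0 ≤ ς → ς ≤ |xstar j| → |xstar j - ς * s| = |xstar j| - ς := by
    rcases hxj.lt_or_gt with hneg | hpos
    · refine ⟨-1, by norm_num, fun ς h0 h1 => ?_⟩
      rw [abs_of_neg hneg] at h1
      rw [abs_of_nonpos (by linarith), abs_of_neg hneg]; ring
    · refine ⟨1, by norm_num, fun ς h0 h1 => ?_⟩
      rw [abs_of_pos hpos] at h1
      rw [abs_of_nonneg (by linarith), abs_of_pos hpos]; ring
  set d : Fin n → ℝ := fun k => if k = j then -s else 0 with hd_def
  have hd : ∀ (ς : ℝ) (i : Fin n),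
      (xstar + ς • d) i = if i = j then xstar j - ς * s else xstar i := by
    intro ς i
    by_cases h : i = j <;> simp [hd_def, h] <;> ring
  set c : Fin q → ℝ := A.mulVec d with hc_def
  have hc : ∀ i, c i = A i j * (-s) := by
    intro i
    simp [hc_def, hd_def, Matrix.mulVec, dotProduct, mul_ite, mul_zero, Finset.sum_ite_eq']
  set r : Fin q → ℝ := fun i => b i - A.mulVec xstar i with hr_def
  have hres : ∀ ς : ℝ, (fun i => b i - A.mulVec (xstar + ς • d) i) = fun i => r i - ς * c i := by
    intro ς
    funext i
    have : A.mulVec (xstar + ς • d) i = A.mulVec xstar i + ς * c i := by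
      rw [Matrix.mulVec_add, Matrix.mulVec_smul]
      simp [hc_def]
    rw [this, hr_def]; ring
  set α : ℝ := ∑ i, r i ^ 2 with hα_def
  set β : ℝ := ∑ i, r i * c i with hβ_def
  set ρ : ℝ := ∑ i, c i ^ 2 with hρ_def
  have hα0 : 0 ≤ α := Finset.sum_nonneg fun i _ => sq_nonneg _
  have hρ0 : 0 ≤ ρ := Finset.sum_nonneg fun i _ => sq_nonneg _
  have hρlt : Real.sqrt ρ < γ := by
    have hρeq : ρ = ∑ i, A i j ^ 2 := by
      rw [hρ_def]
      refine Finset.sum_congr rfl fun i _ => ?_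
      rw [hc i, mul_pow, neg_sq, hs2, mul_one]
    have : Real.sqrt ρ = l2 (fun i => A i j) := by rw [l2, hρeq]
    rw [this]; exact hthr j
  have hPsum : ∀ ς : ℝ, ∑ i, (r i - ς * c i) ^ 2 = α - 2 * β * ς + ρ * ς ^ 2 := by
    intro ς
    rw [Finset.sum_congr rfl fun i _ =>
      show (r i - ς * c i) ^ 2 = r i ^ 2 - (2 * ς) * (r i * c i) + ς ^ 2 * c i ^ 2 by ring,
      Finset.sum_add_distrib, Finset.sum_sub_distrib, ← Finset.mul_sum, ← Finset.mul_sum,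
      ← hα_def, ← hβ_def, ← hρ_def]
    ring
  obtain ⟨L₁, hL₁le, hT⟩ : ∃ L₁ : ℝ, L₁ ≤ Real.sqrt ρ ∧
      Tendsto (fun ς : ℝ => (Real.sqrt (α - 2 * β * ς + ρ * ς ^ 2) - Real.sqrt α) / ς)
        (nhdsWithin 0 (Set.Ioi 0)) (nhds L₁) := by
    rcases eq_or_lt_of_le hα0 with hα | hα
    · -- α = 0 : residual is zero
      refine ⟨Real.sqrt ρ, le_refl _, ?_⟩
      have hβ : β = 0 := by
        have hr : ∀ i, r i = 0 := by
          intro i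
          have := (Finset.sum_eq_zero_iff_of_nonneg
            (fun i _ => sq_nonneg (r i))).mp hα.symm i (Finset.mem_univ i)
          exact pow_eq_zero_iff two_ne_zero |>.mp this
        rw [hβ_def]
        exact Finset.sum_eq_zero fun i _ => by rw [hr i, zero_mul]
      have heq : (fun _ : ℝ => Real.sqrt ρ) =ᶠ[nhdsWithin 0 (Set.Ioi 0)]
          fun ς : ℝ => (Real.sqrt (α - 2 * β * ς + ρ * ς ^ 2) - Real.sqrt α) / ς := by
        filter_upwards [self_mem_nhdsWithin] with ς hς
        have hς0 : (0:ℝ) < ς := hς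
        rw [← hα, hβ]
        rw [show (0:ℝ) - 2 * 0 * ς + ρ * ς ^ 2 = ρ * ς ^ 2 by ring,
          Real.sqrt_mul hρ0, Real.sqrt_sq hς0.le, Real.sqrt_zero, sub_zero,
          mul_div_assoc, div_self hς0.ne', mul_one]
      exact Tendsto.congr' heq tendsto_const_nhds
    · -- α > 0 : residual nonzero, sqrt is differentiable
      have hsqα : 0 < Real.sqrt α := Real.sqrt_pos.mpr hα
      refine ⟨-β / Real.sqrt α, ?_, ?_⟩
      · have hCS : β ^ 2 ≤ α * ρ := by
          rw [hα_def, hβ_def, hρ_def]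
          exact Finset.sum_mul_sq_le_sq_mul_sq Finset.univ r c
        have hb : -β ≤ Real.sqrt α * Real.sqrt ρ := by
          calc -β ≤ |β| := neg_le_abs β
            _ = Real.sqrt (β ^ 2) := (Real.sqrt_sq_eq_abs β).symm
            _ ≤ Real.sqrt (α * ρ) := Real.sqrt_le_sqrt hCS
            _ = Real.sqrt α * Real.sqrt ρ := Real.sqrt_mul hα0 ρ
        rw [div_le_iff₀ hsqα]
        calc -β ≤ Real.sqrt α * Real.sqrt ρ := hb
          _ = Real.sqrt ρ * Real.sqrt α := mul_comm _ _
      · have hQ : HasDerivAt (fun ς : ℝ => α - 2 * β * ς + ρ * ς ^ 2) (-(2 * β)) 0 := by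
          have h1 : HasDerivAt (fun ς : ℝ => ς) 1 0 := hasDerivAt_id 0
          have h2 := (h1.const_mul (2 * β))
          have h3 := (hasDerivAt_pow 2 (0:ℝ)).const_mul ρ
          have := ((hasDerivAt_const (0:ℝ) α).sub h2).add h3
          exact this.congr_deriv (by norm_num)
        have houter : HasDerivAt Real.sqrt (1 / (2 * Real.sqrt α))
            ((fun ς : ℝ => α - 2 * β * ς + ρ * ς ^ 2) 0) := by
          have h0 : (fun ς : ℝ => α - 2 * β * ς + ρ * ς ^ 2) 0 = α := by norm_num
          rw [h0]
          exact Real.hasDerivAt_sqrt hα.ne'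
        have hS : HasDerivAt (fun ς : ℝ => Real.sqrt (α - 2 * β * ς + ρ * ς ^ 2))
            (1 / (2 * Real.sqrt α) * -(2 * β)) 0 := houter.comp 0 hQ
        have hval : 1 / (2 * Real.sqrt α) * -(2 * β) = -β / Real.sqrt α := by
          field_simp
        rw [hval] at hS
        have hT0 := hasDerivAt_iff_tendsto_slope.mp hS
        have hmono : nhdsWithin (0:ℝ) (Set.Ioi 0) ≤ nhdsWithin 0 {(0:ℝ)}ᶜ :=
          nhdsWithin_mono 0 fun x hx => ne_of_gt hx
        refine (hT0.mono_left hmono).congr fun ς => ?_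
        rw [slope_def_field]
        have h0 : Real.sqrt (α - 2 * β * 0 + ρ * 0 ^ 2) = Real.sqrt α := by norm_num
        rw [h0, sub_zero]
  have hjabs : 0 < |xstar j| := abs_pos.mpr hxj
  have hev : (fun ς : ℝ => (F (xstar + ς • d) - F xstar) / ς) =ᶠ[nhdsWithin 0 (Set.Ioi 0)]
      fun ς : ℝ => (Real.sqrt (α - 2 * β * ς + ρ * ς ^ 2) - Real.sqrt α) / ς - γ := by
    filter_upwards [Ioo_mem_nhdsGT_of_mem
      (show (0:ℝ) ∈ Set.Ico 0 |xstar j| from ⟨le_refl _, hjabs⟩)] with ς hς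
    obtain ⟨hς0, hςj⟩ := hς
    have htrim : trimmed1 K (xstar + ς • d) = trimmed1 K xstar - ς := by
      apply trim_shift xstar _ j ς hς0.le Λ₀ hcard hjΛ hmin hlb
      · intro i hi; rw [hd ς i, if_neg hi]
      · rw [hd ς j, if_pos rfl]; exact habs ς hς0.le hςj.le
    have hl2 : l2 (fun i => b i - A.mulVec (xstar + ς • d) i) =
        Real.sqrt (α - 2 * β * ς + ρ * ς ^ 2) := by
      rw [hres ς, l2, hPsum ς]
    have hl20 : l2 (fun i => b i - A.mulVec xstar i) = Real.sqrt α := by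
      rw [l2, hα_def, hr_def]
    rw [hF (xstar + ς • d), hF xstar, htrim, hl2, hl20]
    field_simp
    ring
  have hdd : HasDDerivAt F xstar d (L₁ - γ) :=
    Filter.Tendsto.congr' hev.symm (hT.sub tendsto_const_nhds)
  have h0le := hstat d (L₁ - γ) hdd
  have : L₁ < γ := lt_of_le_of_lt hL₁le hρlt
  linarith
end
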